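/- arXiv:2201.11365 — 2 statements merged into one kernel-verified Lean document; each statement's English description precedes it below -/
import Mathlib

section
/- Let 1 ≤ a ≤ b ≤ c be integers with c = a+b, and let r be an integer with a+c < r ≤ b+c. Then there exist constants κ > 0 and p₀ > 0 such that for all 0 < p < p₀ and all integers l, h, w ≥ c: (i) ℙ_p(I(l,h+1,w) | I(l,h,w)) ≥ (1 − e^{−κ·p^{r−b}·w})^a · (1 − e^{−κ·p^{r−(a+b)}·w})^l, and (ii) ℙ_p(I(l,h,w+1) | I(l,h,w)) ≥ (1 − e^{−κ·p^{r−c}·h})^a · (1 − e^{−κ·p^{r−(a+c)}·h})^l. -/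
open Finset
open scoped Classical

/-- The anisotropic neighbourhood `N_{a,b,c}` in `ℤ³`. -/
noncomputable def nbhd3 (a b c : ℕ) : Finset (ℤ × ℤ × ℤ) :=
  (((Finset.Icc (-(a : ℤ)) (a : ℤ)).erase 0).image fun i => ((i, 0, 0) : ℤ × ℤ × ℤ)) ∪
  (((Finset.Icc (-(b : ℤ)) (b : ℤ)).erase 0).image fun i => ((0, i, 0) : ℤ × ℤ × ℤ)) ∪
  (((Finset.Icc (-(c : ℤ)) (c : ℤ)).erase 0).image fun i => ((0, 0, i) : ℤ × ℤ × ℤ))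

/-- The number of neighbours of `v` (within the region `R`) lying in the set `B`. -/
noncomputable def infCount3 (a b c : ℕ) (R B : Set (ℤ × ℤ × ℤ)) (v : ℤ × ℤ × ℤ) : ℕ :=
  ((nbhd3 a b c).filter fun x => v + x ∈ R ∧ v + x ∈ B).card

/-- The `N_r^{a,b,c}`-bootstrap closure of `A ∩ R` inside the region `R`: the smallest set
containing `A ∩ R` that is closed under infecting any `v ∈ R` with at least `r`
infected neighbours in `R`. -/
def closure3 (a b c r : ℕ) (R A : Set (ℤ × ℤ × ℤ)) : Set (ℤ × ℤ × ℤ) :=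
  ⋂₀ {B : Set (ℤ × ℤ × ℤ) | A ∩ R ⊆ B ∧ ∀ v ∈ R, r ≤ infCount3 a b c R B v → v ∈ B}

/-- The rectangular block `[l] × [h] × [w] ⊆ ℤ³`. -/
noncomputable def block3 (l h w : ℕ) : Finset (ℤ × ℤ × ℤ) :=
  (Finset.Icc (1 : ℤ) (l : ℤ)) ×ˢ (Finset.Icc (1 : ℤ) (h : ℤ)) ×ˢ (Finset.Icc (1 : ℤ) (w : ℤ))

/-- The cube `[L]³ ⊆ ℤ³`. -/
noncomputable def box3 (L : ℕ) : Finset (ℤ × ℤ × ℤ) := block3 L L L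

/-- `R` is internally filled by the initial set `A` under `N_r^{a,b,c}`-bootstrap
percolation, i.e. every vertex of `R` is eventually infected starting from `A ∩ R`. -/
def IntFilled3 (a b c r : ℕ) (R A : Finset (ℤ × ℤ × ℤ)) : Prop :=
  closure3 a b c r (↑R) (↑A) = (↑R : Set (ℤ × ℤ × ℤ))

/-- The probability of the event `E` when each vertex of `V` is included in the initial
set independently with probability `p`. -/
noncomputable def probOn (p : ℝ) (V : Finset (ℤ × ℤ × ℤ)) (E : Finset (ℤ × ℤ × ℤ) → Prop) : ℝ :=
  ∑ A ∈ V.powerset, if E A then p ^ A.card * (1 - p) ^ (V.card - A.card) else 0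

/-- Conditional probability `ℙ_p(E | F)` for the `p`-random subset of `V`. -/
noncomputable def condProbOn (p : ℝ) (V : Finset (ℤ × ℤ × ℤ))
    (E F : Finset (ℤ × ℤ × ℤ) → Prop) : ℝ :=
  probOn p V (fun A => E A ∧ F A) / probOn p V F

section ProbTool

variable {p : ℝ}

abbrev V3 := ℤ × ℤ × ℤ

lemma sum_powerset_union {U W : Finset V3} (hUW : Disjoint U W) (f : Finset V3 → ℝ) :
    ∑ A ∈ (U ∪ W).powerset, f A = ∑ s ∈ U.powerset, ∑ t ∈ W.powerset, f (s ∪ t) := by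
  induction U using Finset.induction generalizing f with
  | empty => simp
  | @insert x U' hx ih =>
    have hxW : x ∉ W := Finset.disjoint_left.mp hUW (Finset.mem_insert_self x U')
    have hU'W : Disjoint U' W := hUW.mono_left (Finset.subset_insert x U')
    have hxUW : x ∉ U' ∪ W := by simp [hx, hxW]
    rw [Finset.insert_union, Finset.sum_powerset_insert hxUW,
      Finset.sum_powerset_insert hx, ih hU'W, ih hU'W (f := fun A => f (insert x A))]
    congr 1
    refine Finset.sum_congr rfl fun s _ => Finset.sum_congr rfl fun t _ => ?_
    rw [Finset.insert_union]

lemma sum_wt_one (V : Finset V3) :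
    ∑ A ∈ V.powerset, p ^ A.card * (1 - p) ^ (V.card - A.card) = 1 := by
  induction V using Finset.induction with
  | empty => simp
  | @insert x V' hx ih =>
    rw [Finset.sum_powerset_insert hx]
    have h1 : ∀ A ∈ V'.powerset,
        p ^ A.card * (1 - p) ^ ((insert x V').card - A.card)
          = (1 - p) * (p ^ A.card * (1 - p) ^ (V'.card - A.card)) := by
      intro A hA
      have hA' : A.card ≤ V'.card := Finset.card_le_card (Finset.mem_powerset.mp hA)
      rw [Finset.card_insert_of_notMem hx]
      have : V'.card + 1 - A.card = (V'.card - A.card) + 1 := by omega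
      rw [this, pow_succ]
      ring
    have h2 : ∀ A ∈ V'.powerset,
        p ^ (insert x A).card * (1 - p) ^ ((insert x V').card - (insert x A).card)
          = p * (p ^ A.card * (1 - p) ^ (V'.card - A.card)) := by
      intro A hA
      have hxA : x ∉ A := fun hc => hx (Finset.mem_powerset.mp hA hc)
      have hA' : A.card ≤ V'.card := Finset.card_le_card (Finset.mem_powerset.mp hA)
      rw [Finset.card_insert_of_notMem hx, Finset.card_insert_of_notMem hxA]
      have : V'.card + 1 - (A.card + 1) = V'.card - A.card := by omega
      rw [this, pow_succ]
      ring
    rw [Finset.sum_congr rfl h1, Finset.sum_congr rfl h2, ← Finset.mul_sum, ← Finset.mul_sum, ih]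
    ring

lemma probOn_true (V : Finset V3) : probOn p V (fun _ => True) = 1 := by
  simp only [probOn, if_true]
  exact sum_wt_one V

lemma probOn_nonneg (hp0 : 0 ≤ p) (hp1 : p ≤ 1) (V : Finset V3) (E : Finset V3 → Prop) :
    0 ≤ probOn p V E := by
  refine Finset.sum_nonneg fun A _ => ?_
  split
  · exact mul_nonneg (pow_nonneg hp0 _) (pow_nonneg (by linarith) _)
  · exact le_refl 0

lemma probOn_mono (hp0 : 0 ≤ p) (hp1 : p ≤ 1) (V : Finset V3) {E E' : Finset V3 → Prop}
    (h : ∀ A, A ∈ V.powerset → E A → E' A) : probOn p V E ≤ probOn p V E' := by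
  refine Finset.sum_le_sum fun A hA => ?_
  by_cases hE : E A
  · rw [if_pos hE, if_pos (h A hA hE)]
  · rw [if_neg hE]
    split
    · exact mul_nonneg (pow_nonneg hp0 _) (pow_nonneg (by linarith) _)
    · exact le_refl 0

lemma probOn_congr (V : Finset V3) {E E' : Finset V3 → Prop}
    (h : ∀ A, A ∈ V.powerset → (E A ↔ E' A)) : probOn p V E = probOn p V E' := by
  refine Finset.sum_congr rfl fun A hA => ?_
  by_cases hE : E A
  · rw [if_pos hE, if_pos ((h A hA).mp hE)]
  · rw [if_neg hE, if_neg (fun hc => hE ((h A hA).mpr hc))]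

lemma probOn_compl (V : Finset V3) (E : Finset V3 → Prop) :
    probOn p V (fun A => ¬ E A) = 1 - probOn p V E := by
  have h1 : probOn p V (fun A => ¬ E A) + probOn p V E
      = ∑ A ∈ V.powerset, p ^ A.card * (1 - p) ^ (V.card - A.card) := by
    rw [probOn, probOn, ← Finset.sum_add_distrib]
    refine Finset.sum_congr rfl fun A _ => ?_
    by_cases hE : E A <;> simp [hE]
  have h2 := sum_wt_one (p := p) V
  linarith

lemma probOn_split {U W : Finset V3} (hUW : Disjoint U W) (g h : Finset V3 → Prop) :
    probOn p (U ∪ W) (fun A => g (A ∩ U) ∧ h (A ∩ W)) = probOn p U g * probOn p W h := by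
  unfold probOn
  rw [sum_powerset_union hUW]
  refine Eq.trans (Finset.sum_congr rfl fun s hs => Finset.sum_congr rfl fun t ht => ?_)
    (Finset.sum_mul_sum _ _ _ _).symm
  have hsU : s ⊆ U := Finset.mem_powerset.mp hs
  have htW : t ⊆ W := Finset.mem_powerset.mp ht
  have hst : Disjoint s t := hUW.mono hsU htW
  have htU : t ∩ U = ∅ := Finset.disjoint_iff_inter_eq_empty.mp ((hUW.mono_right htW).symm)
  have hsW : s ∩ W = ∅ := Finset.disjoint_iff_inter_eq_empty.mp (hUW.mono_left hsU)
  have h1 : (s ∪ t) ∩ U = s := by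
    rw [Finset.union_inter_distrib_right, Finset.inter_eq_left.mpr hsU, htU, Finset.union_empty]
  have h2 : (s ∪ t) ∩ W = t := by
    rw [Finset.union_inter_distrib_right, Finset.inter_eq_left.mpr htW, hsW, Finset.empty_union]
  beta_reduce
  rw [h1, h2]
  by_cases hg : g s
  · by_cases hh : h t
    · rw [if_pos ⟨hg, hh⟩, if_pos hg, if_pos hh]
      have hcu : (s ∪ t).card = s.card + t.card := Finset.card_union_of_disjoint hst
      have hCU : (U ∪ W).card = U.card + W.card := Finset.card_union_of_disjoint hUW
      have hcs : s.card ≤ U.card := Finset.card_le_card hsU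
      have hct : t.card ≤ W.card := Finset.card_le_card htW
      have hexp : (U ∪ W).card - (s.card + t.card) = (U.card - s.card) + (W.card - t.card) := by
        omega
      rw [hcu, hexp, pow_add, pow_add]
      ring
    · rw [if_neg (fun hc => hh hc.2), if_neg hh, mul_zero]
  · rw [if_neg (fun hc => hg hc.1), if_neg hg, zero_mul]

lemma probOn_subset_eq (B : Finset V3) : probOn p B (fun s => B ⊆ s) = p ^ B.card := by
  rw [probOn, Finset.sum_eq_single_of_mem B (Finset.mem_powerset_self B)]
  · rw [if_pos (Finset.Subset.refl B), Nat.sub_self, pow_zero, mul_one]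
  · intro s hs hne
    rw [if_neg]
    intro hBs
    exact hne (Finset.Subset.antisymm (Finset.mem_powerset.mp hs) hBs)

lemma probOn_prod {I : Finset ℕ} {P : ℕ → Finset V3}
    (hdisj : ∀ i ∈ I, ∀ j ∈ I, i ≠ j → Disjoint (P i) (P j)) (E : ℕ → Finset V3 → Prop) :
    probOn p (I.biUnion P) (fun A => ∀ i ∈ I, E i (A ∩ P i)) = ∏ i ∈ I, probOn p (P i) (E i) := by
  induction I using Finset.induction with
  | empty => simp [probOn_true]
  | @insert i₀ I' hi₀ ih =>
    have hdisj' : ∀ i ∈ I', ∀ j ∈ I', i ≠ j → Disjoint (P i) (P j) := fun i hi j hj =>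
      hdisj i (Finset.mem_insert_of_mem hi) j (Finset.mem_insert_of_mem hj)
    have hd : Disjoint (P i₀) (I'.biUnion P) := by
      rw [Finset.disjoint_biUnion_right]
      intro j hj
      exact hdisj i₀ (Finset.mem_insert_self _ _) j (Finset.mem_insert_of_mem hj)
        (fun he => hi₀ (he ▸ hj))
    rw [Finset.biUnion_insert, Finset.prod_insert hi₀, ← ih hdisj',
      ← probOn_split hd (E i₀) (fun t => ∀ i ∈ I', E i (t ∩ P i))]
    refine probOn_congr _ fun A hA => ?_
    have hsub : ∀ i ∈ I', (A ∩ (I'.biUnion P)) ∩ P i = A ∩ P i := by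
      intro i hi
      rw [Finset.inter_assoc, Finset.inter_eq_right.mpr (Finset.subset_biUnion_of_mem P hi)]
    constructor
    · intro hall
      exact ⟨hall i₀ (Finset.mem_insert_self _ _), fun i hi =>
        (hsub i hi).symm ▸ hall i (Finset.mem_insert_of_mem hi)⟩
    · rintro ⟨h1, h2⟩ i hi
      rcases Finset.mem_insert.mp hi with rfl | hi'
      · exact h1
      · exact (hsub i hi') ▸ h2 i hi'

lemma probOn_marginal {U W : Finset V3} (hUW : Disjoint U W) (g : Finset V3 → Prop) :
    probOn p (U ∪ W) (fun A => g (A ∩ U)) = probOn p U g := by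
  have := probOn_split (p := p) hUW g (fun _ => True)
  rw [probOn_true, mul_one] at this
  rw [← this]
  exact probOn_congr _ fun A _ => by simp

end ProbTool
section Closure

variable {a b c r : ℕ} {R R' A A' : Set V3}

lemma closure3_subset_region : closure3 a b c r R A ⊆ R :=
  Set.sInter_subset_of_mem ⟨Set.inter_subset_right, fun v hv _ => hv⟩

lemma inter_subset_closure3 : A ∩ R ⊆ closure3 a b c r R A :=
  fun x hx => Set.mem_sInter.2 fun _ hB => hB.1 hx

lemma infCount3_mono {B B' : Set V3} (hR : R ⊆ R') (hB : B ⊆ B') (v : V3) :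
    infCount3 a b c R B v ≤ infCount3 a b c R' B' v :=
  Finset.card_le_card (Finset.monotone_filter_right _
    (fun x _ hx => ⟨hR hx.1, hB hx.2⟩))

lemma closure3_closed {v : V3} (hv : v ∈ R)
    (hcount : r ≤ infCount3 a b c R (closure3 a b c r R A) v) :
    v ∈ closure3 a b c r R A := by
  refine Set.mem_sInter.2 fun B hB => ?_
  refine hB.2 v hv (le_trans hcount ?_)
  exact infCount3_mono (le_refl R) (Set.sInter_subset_of_mem hB) v

lemma closure3_mono (hR : R ⊆ R') (hA : A ⊆ A') :
    closure3 a b c r R A ⊆ closure3 a b c r R' A' := by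
  refine Set.sInter_subset_of_mem ⟨?_, ?_⟩
  · exact fun x hx => inter_subset_closure3 ⟨hA hx.1, hR hx.2⟩
  · intro v hv hcount
    exact closure3_closed (hR hv) (le_trans hcount (infCount3_mono hR (le_refl _) v))

lemma mem_block3 {l h w : ℕ} {v : V3} :
    v ∈ block3 l h w ↔ 1 ≤ v.1 ∧ v.1 ≤ (l : ℤ) ∧ 1 ≤ v.2.1 ∧ v.2.1 ≤ (h : ℤ)
      ∧ 1 ≤ v.2.2 ∧ v.2.2 ≤ (w : ℤ) := by
  obtain ⟨x, y, z⟩ := v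
  simp [block3, Finset.mem_product, and_assoc]

lemma block3_subset {l h w l' h' w' : ℕ} (hl : l ≤ l') (hh : h ≤ h') (hw : w ≤ w') :
    block3 l h w ⊆ block3 l' h' w' := by
  intro v hv
  rw [mem_block3] at hv ⊢
  refine ⟨hv.1, le_trans hv.2.1 (by exact_mod_cast Nat.cast_le.mpr hl), hv.2.2.1,
    le_trans hv.2.2.2.1 (by exact_mod_cast Nat.cast_le.mpr hh), hv.2.2.2.2.1,
    le_trans hv.2.2.2.2.2 (by exact_mod_cast Nat.cast_le.mpr hw)⟩

lemma card_union3 {X Y Z : Finset V3} (hXY : Disjoint X Y) (hXZ : Disjoint X Z)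
    (hYZ : Disjoint Y Z) : (X ∪ Y ∪ Z).card = X.card + Y.card + Z.card := by
  rw [Finset.card_union_of_disjoint (by rw [Finset.disjoint_union_left]; exact ⟨hXZ, hYZ⟩),
    Finset.card_union_of_disjoint hXY]

lemma infCount3_ge {C : Set V3} {v : V3} (N' : Finset V3)
    (hsub : N' ⊆ nbhd3 a b c) (hcond : ∀ x ∈ N', v + x ∈ R ∧ v + x ∈ C) :
    N'.card ≤ infCount3 a b c R C v :=
  Finset.card_le_card fun x hx => Finset.mem_filter.2 ⟨hsub hx, hcond x hx⟩

lemma mem_nbhd3_e1 {i : ℤ} (hi : i ≠ 0) (hia : -(a:ℤ) ≤ i) (hia' : i ≤ a) :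
    ((i, 0, 0) : V3) ∈ nbhd3 a b c := by
  refine Finset.mem_union_left _ (Finset.mem_union_left _ (Finset.mem_image.2 ⟨i, ?_, rfl⟩))
  exact Finset.mem_erase.2 ⟨hi, Finset.mem_Icc.2 ⟨hia, hia'⟩⟩

lemma mem_nbhd3_e2 {i : ℤ} (hi : i ≠ 0) (hia : -(b:ℤ) ≤ i) (hia' : i ≤ b) :
    ((0, i, 0) : V3) ∈ nbhd3 a b c := by
  refine Finset.mem_union_left _ (Finset.mem_union_right _ (Finset.mem_image.2 ⟨i, ?_, rfl⟩))
  exact Finset.mem_erase.2 ⟨hi, Finset.mem_Icc.2 ⟨hia, hia'⟩⟩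

lemma mem_nbhd3_e3 {i : ℤ} (hi : i ≠ 0) (hia : -(c:ℤ) ≤ i) (hia' : i ≤ c) :
    ((0, 0, i) : V3) ∈ nbhd3 a b c := by
  refine Finset.mem_union_right _ (Finset.mem_image.2 ⟨i, ?_, rfl⟩)
  exact Finset.mem_erase.2 ⟨hi, Finset.mem_Icc.2 ⟨hia, hia'⟩⟩

end Closure
section Det

/-- seed length for row `x` (growth in `e₂` direction, case (i)) -/
def tx1 (a b c r x : ℕ) : ℕ := if x ≤ a then r - b else r - c

lemma det_i (a b c r : ℕ) (ha : 1 ≤ a) (hab : a ≤ b) (hbc : b ≤ c) (hc : c = a + b)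
    (hr1 : a + c < r) (hr2 : r ≤ b + c)
    (l h w : ℕ) (hl : c ≤ l) (hh : c ≤ h) (hw : c ≤ w)
    (A : Finset V3)
    (hF : IntFilled3 a b c r (block3 l h w) A)
    (hG : ∀ x : ℕ, 1 ≤ x → x ≤ l → ∃ s : ℕ, 1 ≤ s ∧ s + tx1 a b c r x ≤ w + 1 ∧
      ∀ k : ℕ, k < tx1 a b c r x → (((x : ℤ), ((h : ℤ) + 1, ((s + k : ℕ) : ℤ))) : V3) ∈ A) :
    IntFilled3 a b c r (block3 l (h + 1) w) A := by
  set V := block3 l (h + 1) w with hV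
  set C := closure3 a b c r (↑V) (↑A) with hC
  have hTV : block3 l h w ⊆ V := block3_subset (le_refl l) (Nat.le_succ h) (le_refl w)
  have hT : ∀ v : V3, v ∈ block3 l h w → v ∈ C := by
    intro v hv
    have h1 : v ∈ closure3 a b c r (↑(block3 l h w)) (↑A) := by
      rw [hF]; exact_mod_cast hv
    exact closure3_mono (by exact_mod_cast hTV) (le_refl _) h1
  -- the key infection step
  have step : ∀ x : ℕ, 1 ≤ x → x ≤ l →
      (∀ x' : ℕ, 1 ≤ x' → x' < x → ∀ z : ℤ, 1 ≤ z → z ≤ w →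
        (((x' : ℤ), ((h : ℤ) + 1, z)) : V3) ∈ C) →
      ∀ z : ℤ, 1 ≤ z → z ≤ w → ∀ ε : ℤ, (ε = 1 ∨ ε = -1) →
      (∀ j : ℕ, 1 ≤ j → j ≤ tx1 a b c r x →
        1 ≤ z + ε * j ∧ z + ε * j ≤ w ∧ (((x : ℤ), ((h : ℤ) + 1, z + ε * j)) : V3) ∈ C) →
      (((x : ℤ), ((h : ℤ) + 1, z)) : V3) ∈ C := by
    intro x hx1 hxl ih z hz1 hzw ε hε hrun
    set t := tx1 a b c r x with ht
    set mn := min (x - 1) a with hmn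
    have htc : t ≤ c := by
      rw [ht, tx1]; split <;> omega
    have ht1 : 1 ≤ t := by
      rw [ht, tx1]; split <;> omega
    have hcount : r ≤ mn + b + t := by
      rw [ht, tx1, hmn]; split <;> omega
    have hvV : (((x : ℤ), ((h : ℤ) + 1, z)) : V3) ∈ (↑V : Set V3) := by
      rw [Finset.mem_coe, hV, mem_block3]
      simp only
      push_cast
      omega
    refine closure3_closed hvV ?_
    set S1 : Finset V3 := (Finset.Icc 1 mn).image (fun i : ℕ => ((-(i : ℤ), (0 : ℤ), (0 : ℤ)) : V3)) with hS1
    set S2 : Finset V3 := (Finset.Icc 1 b).image (fun j : ℕ => (((0 : ℤ), -(j : ℤ), (0 : ℤ)) : V3)) with hS2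
    set S3 : Finset V3 := (Finset.Icc 1 t).image (fun j : ℕ => (((0 : ℤ), (0 : ℤ), ε * (j : ℤ)) : V3)) with hS3
    have habs : ∀ j : ℕ, 1 ≤ j → j ≤ t → ε * (j : ℤ) ≠ 0 ∧ -(c:ℤ) ≤ ε * j ∧ ε * j ≤ c := by
      intro j hj hjt
      rcases hε with rfl | rfl <;> refine ⟨by omega, by omega, by omega⟩
    refine le_trans ?_ (infCount3_ge (R := (↑V : Set V3)) (S1 ∪ S2 ∪ S3) ?_ ?_)
    · -- cardinality
      have c1 : S1.card = mn := by
        rw [hS1, Finset.card_image_of_injective _ (fun m n hmn' => by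
          simp only [Prod.ext_iff] at hmn'; exact_mod_cast neg_inj.mp hmn'.1), Nat.card_Icc]
        omega
      have c2 : S2.card = b := by
        rw [hS2, Finset.card_image_of_injective _ (fun m n hmn' => by
          simp only [Prod.ext_iff] at hmn'; exact_mod_cast neg_inj.mp hmn'.2.1), Nat.card_Icc]
        omega
      have c3 : S3.card = t := by
        rw [hS3, Finset.card_image_of_injective _ (fun m n hmn' => by
          simp only [Prod.ext_iff] at hmn'
          have := hmn'.2.2
          rcases hε with rfl | rfl <;> omega), Nat.card_Icc]
        omega
      have d12 : Disjoint S1 S2 := by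
        rw [Finset.disjoint_left]
        rintro v hv1 hv2
        obtain ⟨i, hi, rfl⟩ := Finset.mem_image.mp hv1
        obtain ⟨j, hj, hEq⟩ := Finset.mem_image.mp hv2
        rw [Finset.mem_Icc] at hi hj
        simp only [Prod.ext_iff] at hEq
        omega
      have d13 : Disjoint S1 S3 := by
        rw [Finset.disjoint_left]
        rintro v hv1 hv2
        obtain ⟨i, hi, rfl⟩ := Finset.mem_image.mp hv1
        obtain ⟨j, hj, hEq⟩ := Finset.mem_image.mp hv2
        rw [Finset.mem_Icc] at hi hj
        simp only [Prod.ext_iff] at hEq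
        omega
      have d23 : Disjoint S2 S3 := by
        rw [Finset.disjoint_left]
        rintro v hv1 hv2
        obtain ⟨i, hi, rfl⟩ := Finset.mem_image.mp hv1
        obtain ⟨j, hj, hEq⟩ := Finset.mem_image.mp hv2
        rw [Finset.mem_Icc] at hi hj
        simp only [Prod.ext_iff] at hEq
        omega
      rw [card_union3 d12 d13 d23, c1, c2, c3]
      exact hcount
    · -- subset of nbhd3
      intro v hv
      rcases Finset.mem_union.mp hv with hv' | hv'
      · rcases Finset.mem_union.mp hv' with hv'' | hv''
        · obtain ⟨i, hi, rfl⟩ := Finset.mem_image.mp hv''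
          rw [Finset.mem_Icc] at hi
          exact mem_nbhd3_e1 (by omega) (by omega) (by omega)
        · obtain ⟨j, hj, rfl⟩ := Finset.mem_image.mp hv''
          rw [Finset.mem_Icc] at hj
          exact mem_nbhd3_e2 (by omega) (by omega) (by omega)
      · obtain ⟨j, hj, rfl⟩ := Finset.mem_image.mp hv'
        rw [Finset.mem_Icc] at hj
        exact mem_nbhd3_e3 (habs j hj.1 hj.2).1 (habs j hj.1 hj.2).2.1 (habs j hj.1 hj.2).2.2
    · -- each element: in region and in C
      intro u hu
      rcases Finset.mem_union.mp hu with hu' | hu'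
      · rcases Finset.mem_union.mp hu' with hu'' | hu''
        · obtain ⟨i, hi, rfl⟩ := Finset.mem_image.mp hu''
          rw [Finset.mem_Icc] at hi
          have hpt : (((x : ℤ), ((h : ℤ) + 1, z)) : V3) + ((-(i : ℤ), (0 : ℤ), (0 : ℤ)) : V3)
              = ((((x - i : ℕ) : ℤ)), ((h : ℤ) + 1, z)) := by
            show ((x : ℤ) + -(i : ℤ), ((h : ℤ) + 1 + 0, z + 0)) = _
            push_cast [Nat.cast_sub (by omega : i ≤ x)]
            simp only [Prod.mk.injEq]
            omega
          rw [hpt]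
          constructor
          · rw [Finset.mem_coe, hV, mem_block3]
            simp only
            push_cast
            omega
          · exact ih (x - i) (by omega) (by omega) z hz1 hzw
        · obtain ⟨j, hj, rfl⟩ := Finset.mem_image.mp hu''
          rw [Finset.mem_Icc] at hj
          have hmem : (((x : ℤ), ((h : ℤ) + 1, z)) : V3) + (((0 : ℤ), -(j : ℤ), (0 : ℤ)) : V3)
              ∈ block3 l h w := by
            show ((x : ℤ) + 0, ((h : ℤ) + 1 + -(j : ℤ), z + 0)) ∈ _
            rw [mem_block3]
            simp only
            push_cast
            omega
          exact ⟨Finset.mem_coe.mpr (hTV hmem), hT _ hmem⟩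
      · obtain ⟨j, hj, rfl⟩ := Finset.mem_image.mp hu'
        rw [Finset.mem_Icc] at hj
        have hrj := hrun j hj.1 hj.2
        have hpt : (((x : ℤ), ((h : ℤ) + 1, z)) : V3) + (((0 : ℤ), (0 : ℤ), ε * (j : ℤ)) : V3)
            = (((x : ℤ), ((h : ℤ) + 1, z + ε * j)) : V3) := by
          show ((x : ℤ) + 0, ((h : ℤ) + 1 + 0, z + ε * j)) = _
          simp only [Prod.mk.injEq]
          refine ⟨by ring, by ring, by simp⟩
        rw [hpt]
        constructor
        · rw [Finset.mem_coe, hV, mem_block3]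
          simp only
          push_cast
          omega
        · exact hrj.2.2
  -- row filling by strong induction on x
  have rowC : ∀ x : ℕ, 1 ≤ x → x ≤ l → ∀ z : ℤ, 1 ≤ z → z ≤ w →
      (((x : ℤ), ((h : ℤ) + 1, z)) : V3) ∈ C := by
    intro x
    induction x using Nat.strong_induction_on with
    | _ x ih =>
      intro hx1 hxl z hz1 hzw
      obtain ⟨s, hs1, hsw, hseed⟩ := hG x hx1 hxl
      set t := tx1 a b c r x with ht
      have ht1 : 1 ≤ t := by rw [ht, tx1]; split <;> omega
      have htc : t ≤ c := by rw [ht, tx1]; split <;> omega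
      have ihrows : ∀ x' : ℕ, 1 ≤ x' → x' < x → ∀ z' : ℤ, 1 ≤ z' → z' ≤ w →
          (((x' : ℤ), ((h : ℤ) + 1, z')) : V3) ∈ C :=
        fun x' h1 h2 => ih x' h2 h1 (by omega)
      have seedC : ∀ k : ℕ, k < t → (((x : ℤ), ((h : ℤ) + 1, ((s + k : ℕ) : ℤ))) : V3) ∈ C := by
        intro k hk
        refine inter_subset_closure3 ⟨Finset.mem_coe.mpr (hseed k hk), ?_⟩
        rw [Finset.mem_coe, hV, mem_block3]
        simp only
        push_cast
        omega
      have right : ∀ d : ℕ, ∀ z' : ℤ, (s : ℤ) ≤ z' → z' ≤ w → z' ≤ (s : ℤ) + t - 1 + d →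
          (((x : ℤ), ((h : ℤ) + 1, z')) : V3) ∈ C := by
        intro d
        induction d with
        | zero =>
          intro z' h1 h2 h3
          have hk : ((s + (z' - s).toNat : ℕ) : ℤ) = z' := by push_cast; omega
          have := seedC (z' - s).toNat (by omega)
          rwa [hk] at this
        | succ d ihd =>
          intro z' h1 h2 h3
          by_cases hcase : z' ≤ (s : ℤ) + t - 1 + d
          · exact ihd z' h1 h2 hcase
          · refine step x hx1 hxl ihrows z' (by omega) h2 (-1) (Or.inr rfl) ?_
            intro j hj1 hjt
            refine ⟨by omega, by omega, ?_⟩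
            have : z' + (-1) * (j : ℤ) = z' - j := by ring
            rw [this]
            exact ihd (z' - j) (by omega) (by omega) (by omega)
      have left : ∀ d : ℕ, ∀ z' : ℤ, 1 ≤ z' → (s : ℤ) ≤ z' + d → z' ≤ (s : ℤ) + t - 1 →
          (((x : ℤ), ((h : ℤ) + 1, z')) : V3) ∈ C := by
        intro d
        induction d with
        | zero =>
          intro z' h1 h2 h3
          have hk : ((s + (z' - s).toNat : ℕ) : ℤ) = z' := by push_cast; omega
          have := seedC (z' - s).toNat (by omega)
          rwa [hk] at this
        | succ d ihd =>
          intro z' h1 h2 h3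
          by_cases hcase : (s : ℤ) ≤ z' + d
          · exact ihd z' h1 hcase h3
          · refine step x hx1 hxl ihrows z' h1 (by push_cast at hsw ⊢; omega) 1 (Or.inl rfl) ?_
            intro j hj1 hjt
            refine ⟨by omega, by push_cast at hsw ⊢; omega, ?_⟩
            have : z' + 1 * (j : ℤ) = z' + j := by ring
            rw [this]
            exact ihd (z' + j) (by omega) (by omega) (by omega)
      by_cases hzs : (s : ℤ) ≤ z
      · exact right (z - s).toNat z hzs hzw (by omega)
      · exact left (s - z).toNat z hz1 (by omega) (by omega)
  -- conclude
  rw [IntFilled3]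
  refine Set.Subset.antisymm closure3_subset_region ?_
  intro v hv
  rw [Finset.mem_coe, hV, mem_block3] at hv
  obtain ⟨vx, vy, vz⟩ := v
  simp only at hv
  by_cases hy : vy ≤ (h : ℤ)
  · refine hT (vx, vy, vz) ?_
    rw [mem_block3]
    exact ⟨hv.1, hv.2.1, hv.2.2.1, hy, hv.2.2.2.2.1, hv.2.2.2.2.2⟩
  · have hyeq : vy = (h : ℤ) + 1 := by push_cast at hv; omega
    have hx : vx = ((vx.toNat : ℕ) : ℤ) := by omega
    have := rowC vx.toNat (by omega) (by push_cast at hv ⊢; omega) vz hv.2.2.2.2.1 hv.2.2.2.2.2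
    rw [← hx, ← hyeq] at this
    exact this

end Det
/-- seed length for row `x` (growth in `e₃` direction, case (ii)) -/
def tx2 (a c r x : ℕ) : ℕ := if x ≤ a then r - c else r - (a + c)

lemma det_ii (a b c r : ℕ) (ha : 1 ≤ a) (hab : a ≤ b) (hbc : b ≤ c) (hc : c = a + b)
    (hr1 : a + c < r) (hr2 : r ≤ b + c)
    (l h w : ℕ) (hl : c ≤ l) (hh : c ≤ h) (hw : c ≤ w)
    (A : Finset V3)
    (hF : IntFilled3 a b c r (block3 l h w) A)
    (hG : ∀ x : ℕ, 1 ≤ x → x ≤ l → ∃ s : ℕ, 1 ≤ s ∧ s + tx2 a c r x ≤ h + 1 ∧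
      ∀ k : ℕ, k < tx2 a c r x → (((x : ℤ), (((s + k : ℕ) : ℤ), (w : ℤ) + 1)) : V3) ∈ A) :
    IntFilled3 a b c r (block3 l h (w + 1)) A := by
  set V := block3 l h (w + 1) with hV
  set C := closure3 a b c r (↑V) (↑A) with hC
  have hTV : block3 l h w ⊆ V := block3_subset (le_refl l) (le_refl h) (Nat.le_succ w)
  have hT : ∀ v : V3, v ∈ block3 l h w → v ∈ C := by
    intro v hv
    have h1 : v ∈ closure3 a b c r (↑(block3 l h w)) (↑A) := by
      rw [hF]; exact_mod_cast hv
    exact closure3_mono (by exact_mod_cast hTV) (le_refl _) h1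
  -- the key infection step
  have step : ∀ x : ℕ, 1 ≤ x → x ≤ l →
      (∀ x' : ℕ, 1 ≤ x' → x' < x → ∀ z : ℤ, 1 ≤ z → z ≤ h →
        (((x' : ℤ), (z, (w : ℤ) + 1)) : V3) ∈ C) →
      ∀ z : ℤ, 1 ≤ z → z ≤ h → ∀ ε : ℤ, (ε = 1 ∨ ε = -1) →
      (∀ j : ℕ, 1 ≤ j → j ≤ tx2 a c r x →
        1 ≤ z + ε * j ∧ z + ε * j ≤ h ∧ (((x : ℤ), (z + ε * j, (w : ℤ) + 1)) : V3) ∈ C) →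
      (((x : ℤ), (z, (w : ℤ) + 1)) : V3) ∈ C := by
    intro x hx1 hxl ih z hz1 hzw ε hε hrun
    set t := tx2 a c r x with ht
    set mn := min (x - 1) a with hmn
    have htc : t ≤ b := by
      rw [ht, tx2]; split <;> omega
    have ht1 : 1 ≤ t := by
      rw [ht, tx2]; split <;> omega
    have hcount : r ≤ mn + c + t := by
      rw [ht, tx2, hmn]; split <;> omega
    have hvV : (((x : ℤ), (z, (w : ℤ) + 1)) : V3) ∈ (↑V : Set V3) := by
      rw [Finset.mem_coe, hV, mem_block3]
      simp only
      push_cast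
      omega
    refine closure3_closed hvV ?_
    set S1 : Finset V3 := (Finset.Icc 1 mn).image (fun i : ℕ => ((-(i : ℤ), (0 : ℤ), (0 : ℤ)) : V3)) with hS1
    set S2 : Finset V3 := (Finset.Icc 1 c).image (fun j : ℕ => (((0 : ℤ), (0 : ℤ), -(j : ℤ)) : V3)) with hS2
    set S3 : Finset V3 := (Finset.Icc 1 t).image (fun j : ℕ => (((0 : ℤ), ε * (j : ℤ), (0 : ℤ)) : V3)) with hS3
    have habs : ∀ j : ℕ, 1 ≤ j → j ≤ t → ε * (j : ℤ) ≠ 0 ∧ -(b:ℤ) ≤ ε * j ∧ ε * j ≤ b := by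
      intro j hj hjt
      rcases hε with rfl | rfl <;> refine ⟨by omega, by omega, by omega⟩
    refine le_trans ?_ (infCount3_ge (R := (↑V : Set V3)) (S1 ∪ S2 ∪ S3) ?_ ?_)
    · -- cardinality
      have c1 : S1.card = mn := by
        rw [hS1, Finset.card_image_of_injective _ (fun m n hmn' => by
          simp only [Prod.ext_iff] at hmn'; exact_mod_cast neg_inj.mp hmn'.1), Nat.card_Icc]
        omega
      have c2 : S2.card = c := by
        rw [hS2, Finset.card_image_of_injective _ (fun m n hmn' => by
          simp only [Prod.ext_iff] at hmn'; exact_mod_cast neg_inj.mp hmn'.2.2), Nat.card_Icc]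
        omega
      have c3 : S3.card = t := by
        rw [hS3, Finset.card_image_of_injective _ (fun m n hmn' => by
          simp only [Prod.ext_iff] at hmn'
          have := hmn'.2.1
          rcases hε with rfl | rfl <;> omega), Nat.card_Icc]
        omega
      have d12 : Disjoint S1 S2 := by
        rw [Finset.disjoint_left]
        rintro v hv1 hv2
        obtain ⟨i, hi, rfl⟩ := Finset.mem_image.mp hv1
        obtain ⟨j, hj, hEq⟩ := Finset.mem_image.mp hv2
        rw [Finset.mem_Icc] at hi hj
        simp only [Prod.ext_iff] at hEq
        omega
      have d13 : Disjoint S1 S3 := by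
        rw [Finset.disjoint_left]
        rintro v hv1 hv2
        obtain ⟨i, hi, rfl⟩ := Finset.mem_image.mp hv1
        obtain ⟨j, hj, hEq⟩ := Finset.mem_image.mp hv2
        rw [Finset.mem_Icc] at hi hj
        simp only [Prod.ext_iff] at hEq
        omega
      have d23 : Disjoint S2 S3 := by
        rw [Finset.disjoint_left]
        rintro v hv1 hv2
        obtain ⟨i, hi, rfl⟩ := Finset.mem_image.mp hv1
        obtain ⟨j, hj, hEq⟩ := Finset.mem_image.mp hv2
        rw [Finset.mem_Icc] at hi hj
        simp only [Prod.ext_iff] at hEq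
        omega
      rw [card_union3 d12 d13 d23, c1, c2, c3]
      exact hcount
    · -- subset of nbhd3
      intro v hv
      rcases Finset.mem_union.mp hv with hv' | hv'
      · rcases Finset.mem_union.mp hv' with hv'' | hv''
        · obtain ⟨i, hi, rfl⟩ := Finset.mem_image.mp hv''
          rw [Finset.mem_Icc] at hi
          exact mem_nbhd3_e1 (by omega) (by omega) (by omega)
        · obtain ⟨j, hj, rfl⟩ := Finset.mem_image.mp hv''
          rw [Finset.mem_Icc] at hj
          exact mem_nbhd3_e3 (by omega) (by omega) (by omega)
      · obtain ⟨j, hj, rfl⟩ := Finset.mem_image.mp hv'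
        rw [Finset.mem_Icc] at hj
        exact mem_nbhd3_e2 (habs j hj.1 hj.2).1 (habs j hj.1 hj.2).2.1 (habs j hj.1 hj.2).2.2
    · -- each element: in region and in C
      intro u hu
      rcases Finset.mem_union.mp hu with hu' | hu'
      · rcases Finset.mem_union.mp hu' with hu'' | hu''
        · obtain ⟨i, hi, rfl⟩ := Finset.mem_image.mp hu''
          rw [Finset.mem_Icc] at hi
          have hpt : (((x : ℤ), (z, (w : ℤ) + 1)) : V3) + ((-(i : ℤ), (0 : ℤ), (0 : ℤ)) : V3)
              = ((((x - i : ℕ) : ℤ)), (z, (w : ℤ) + 1)) := by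
            show ((x : ℤ) + -(i : ℤ), (z + 0, (w : ℤ) + 1 + 0)) = _
            push_cast [Nat.cast_sub (by omega : i ≤ x)]
            simp only [Prod.mk.injEq]
            omega
          rw [hpt]
          constructor
          · rw [Finset.mem_coe, hV, mem_block3]
            simp only
            push_cast
            omega
          · exact ih (x - i) (by omega) (by omega) z hz1 hzw
        · obtain ⟨j, hj, rfl⟩ := Finset.mem_image.mp hu''
          rw [Finset.mem_Icc] at hj
          have hmem : (((x : ℤ), (z, (w : ℤ) + 1)) : V3) + (((0 : ℤ), (0 : ℤ), -(j : ℤ)) : V3)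
              ∈ block3 l h w := by
            show ((x : ℤ) + 0, (z + 0, (w : ℤ) + 1 + -(j : ℤ))) ∈ _
            rw [mem_block3]
            simp only
            push_cast
            omega
          exact ⟨Finset.mem_coe.mpr (hTV hmem), hT _ hmem⟩
      · obtain ⟨j, hj, rfl⟩ := Finset.mem_image.mp hu'
        rw [Finset.mem_Icc] at hj
        have hrj := hrun j hj.1 hj.2
        have hpt : (((x : ℤ), (z, (w : ℤ) + 1)) : V3) + (((0 : ℤ), ε * (j : ℤ), (0 : ℤ)) : V3)
            = (((x : ℤ), (z + ε * j, (w : ℤ) + 1)) : V3) := by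
          show ((x : ℤ) + 0, (z + ε * j, (w : ℤ) + 1 + 0)) = _
          simp only [Prod.mk.injEq]
          refine ⟨by ring, by simp, by ring⟩
        rw [hpt]
        constructor
        · rw [Finset.mem_coe, hV, mem_block3]
          simp only
          push_cast
          omega
        · exact hrj.2.2
  -- row filling by strong induction on x
  have rowC : ∀ x : ℕ, 1 ≤ x → x ≤ l → ∀ z : ℤ, 1 ≤ z → z ≤ h →
      (((x : ℤ), (z, (w : ℤ) + 1)) : V3) ∈ C := by
    intro x
    induction x using Nat.strong_induction_on with
    | _ x ih =>
      intro hx1 hxl z hz1 hzw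
      obtain ⟨s, hs1, hsw, hseed⟩ := hG x hx1 hxl
      set t := tx2 a c r x with ht
      have ht1 : 1 ≤ t := by rw [ht, tx2]; split <;> omega
      have htc : t ≤ b := by rw [ht, tx2]; split <;> omega
      have ihrows : ∀ x' : ℕ, 1 ≤ x' → x' < x → ∀ z' : ℤ, 1 ≤ z' → z' ≤ h →
          (((x' : ℤ), (z', (w : ℤ) + 1)) : V3) ∈ C :=
        fun x' h1 h2 => ih x' h2 h1 (by omega)
      have seedC : ∀ k : ℕ, k < t → (((x : ℤ), (((s + k : ℕ) : ℤ), (w : ℤ) + 1)) : V3) ∈ C := by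
        intro k hk
        refine inter_subset_closure3 ⟨Finset.mem_coe.mpr (hseed k hk), ?_⟩
        rw [Finset.mem_coe, hV, mem_block3]
        simp only
        push_cast
        omega
      have right : ∀ d : ℕ, ∀ z' : ℤ, (s : ℤ) ≤ z' → z' ≤ h → z' ≤ (s : ℤ) + t - 1 + d →
          (((x : ℤ), (z', (w : ℤ) + 1)) : V3) ∈ C := by
        intro d
        induction d with
        | zero =>
          intro z' h1 h2 h3
          have hk : ((s + (z' - s).toNat : ℕ) : ℤ) = z' := by push_cast; omega
          have := seedC (z' - s).toNat (by omega)
          rwa [hk] at this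
        | succ d ihd =>
          intro z' h1 h2 h3
          by_cases hcase : z' ≤ (s : ℤ) + t - 1 + d
          · exact ihd z' h1 h2 hcase
          · refine step x hx1 hxl ihrows z' (by omega) h2 (-1) (Or.inr rfl) ?_
            intro j hj1 hjt
            refine ⟨by omega, by omega, ?_⟩
            have heq2 : z' + (-1) * (j : ℤ) = z' - j := by ring
            rw [heq2]
            exact ihd (z' - j) (by omega) (by omega) (by omega)
      have left : ∀ d : ℕ, ∀ z' : ℤ, 1 ≤ z' → (s : ℤ) ≤ z' + d → z' ≤ (s : ℤ) + t - 1 →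
          (((x : ℤ), (z', (w : ℤ) + 1)) : V3) ∈ C := by
        intro d
        induction d with
        | zero =>
          intro z' h1 h2 h3
          have hk : ((s + (z' - s).toNat : ℕ) : ℤ) = z' := by push_cast; omega
          have := seedC (z' - s).toNat (by omega)
          rwa [hk] at this
        | succ d ihd =>
          intro z' h1 h2 h3
          by_cases hcase : (s : ℤ) ≤ z' + d
          · exact ihd z' h1 hcase h3
          · refine step x hx1 hxl ihrows z' h1 (by omega) 1 (Or.inl rfl) ?_
            intro j hj1 hjt
            refine ⟨by omega, by omega, ?_⟩
            have heq2 : z' + 1 * (j : ℤ) = z' + j := by ring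
            rw [heq2]
            exact ihd (z' + j) (by omega) (by omega) (by omega)
      by_cases hzs : (s : ℤ) ≤ z
      · exact right (z - s).toNat z hzs hzw (by omega)
      · exact left (s - z).toNat z hz1 (by omega) (by omega)
  -- conclude
  rw [IntFilled3]
  refine Set.Subset.antisymm closure3_subset_region ?_
  intro v hv
  rw [Finset.mem_coe, hV, mem_block3] at hv
  obtain ⟨vx, vy, vz⟩ := v
  simp only at hv
  by_cases hz : vz ≤ (w : ℤ)
  · refine hT (vx, vy, vz) ?_
    rw [mem_block3]
    exact ⟨hv.1, hv.2.1, hv.2.2.1, hv.2.2.2.1, hv.2.2.2.2.1, hz⟩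
  · have hzeq : vz = (w : ℤ) + 1 := by push_cast at hv; omega
    have hx : vx = ((vx.toNat : ℕ) : ℤ) := by omega
    have := rowC vx.toNat (by omega) (by push_cast at hv ⊢; omega) vy hv.2.2.1 hv.2.2.2.1
    rw [← hx, ← hzeq] at this
    exact this
section RowProb

variable {p : ℝ}

lemma row_prob (φ : ℕ → V3) (hinj : Function.Injective φ) (n t : ℕ) :
    probOn p ((Finset.Icc 1 n).image φ)
      (fun s => ∃ j ∈ Finset.range (n / t), (Finset.Icc (t*j+1) (t*j+t)).image φ ⊆ s)
      = 1 - (1 - p^t)^(n/t) := by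
  set m := n / t with hm
  set row : Finset V3 := (Finset.Icc 1 n).image φ with hrow
  set blk : ℕ → Finset V3 := fun j => (Finset.Icc (t*j+1) (t*j+t)).image φ with hblk
  have hblksub : ∀ j ∈ Finset.range m, blk j ⊆ row := by
    intro j hj
    refine Finset.image_subset_image ?_
    intro z hz
    rw [Finset.mem_Icc] at hz ⊢
    have hjm : j < m := Finset.mem_range.mp hj
    have h1 : (j+1) * t ≤ m * t := Nat.mul_le_mul_right t hjm
    have h2 : m * t ≤ n := by rw [hm]; exact Nat.div_mul_le_self n t
    have h3 : t * j + t ≤ n := by nlinarith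
    constructor <;> omega
  have hblkdisj : ∀ i ∈ Finset.range m, ∀ j ∈ Finset.range m, i ≠ j → Disjoint (blk i) (blk j) := by
    intro i _ j _ hij
    rw [hblk]
    simp only
    rw [Finset.disjoint_image hinj, Finset.disjoint_left]
    intro z hz1 hz2
    rw [Finset.mem_Icc] at hz1 hz2
    rcases Nat.lt_or_ge i j with hlt | hge
    · have h1 : (i+1) * t ≤ j * t := Nat.mul_le_mul_right t hlt
      have h2 : t * i + t ≤ t * j := by nlinarith
      omega
    · have hlt : j < i := by omega
      have h1 : (j+1) * t ≤ i * t := Nat.mul_le_mul_right t hlt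
      have h2 : t * j + t ≤ t * i := by nlinarith
      omega
  set B : Finset V3 := (Finset.range m).biUnion blk with hB
  have hBsub : B ⊆ row := by
    rw [hB]
    exact Finset.biUnion_subset.mpr hblksub
  have hcompl : probOn p row (fun s => ¬ ∃ j ∈ Finset.range m, blk j ⊆ s)
      = (1 - p^t)^m := by
    have e1 : probOn p row (fun s => ¬ ∃ j ∈ Finset.range m, blk j ⊆ s)
        = probOn p (B ∪ (row \ B))
          (fun s => (fun u => ∀ j ∈ Finset.range m, ¬ blk j ⊆ u) (s ∩ B)) := by
      rw [Finset.union_sdiff_of_subset hBsub]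
      refine probOn_congr _ fun s _ => ?_
      simp only [not_exists]
      push_neg
      constructor
      · intro hall j hj hsub
        exact hall j hj (hsub.trans Finset.inter_subset_left)
      · intro hall j hj hsub
        exact hall j hj (Finset.subset_inter hsub (Finset.subset_biUnion_of_mem blk hj))
    rw [e1, probOn_marginal (U := B) (W := row \ B) Finset.disjoint_sdiff
      (fun u => ∀ j ∈ Finset.range m, ¬ blk j ⊆ u)]
    have e2 : probOn p B (fun u => ∀ j ∈ Finset.range m, ¬ blk j ⊆ u)
        = probOn p B (fun u => ∀ j ∈ Finset.range m, (fun v => ¬ blk j ⊆ v) (u ∩ blk j)) := by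
      refine probOn_congr _ fun u _ => ?_
      refine forall_congr' fun j => ?_
      refine imp_congr Iff.rfl (not_congr ⟨fun hsub => Finset.subset_inter hsub (le_refl _),
        fun hsub => hsub.trans Finset.inter_subset_left⟩)
    rw [e2, hB, probOn_prod hblkdisj (fun j v => ¬ blk j ⊆ v)]
    have e3 : ∀ j ∈ Finset.range m, probOn p (blk j) (fun v => ¬ blk j ⊆ v) = 1 - p^t := by
      intro j _
      rw [probOn_compl, probOn_subset_eq]
      have : (blk j).card = t := by
        rw [hblk]
        simp only
        rw [Finset.card_image_of_injective _ hinj, Nat.card_Icc]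
        omega
      rw [this]
    rw [Finset.prod_congr rfl e3, Finset.prod_const, Finset.card_range]
  have := probOn_compl (p := p) row (fun s => ∃ j ∈ Finset.range m, blk j ⊆ s)
  rw [hcompl] at this
  linarith

end RowProb
section Main

variable {p : ℝ}

lemma closure3_restrict (a b c r : ℕ) (T A : Finset V3) :
    closure3 a b c r (↑T) (↑A) = closure3 a b c r (↑T) (↑(A ∩ T)) := by
  unfold closure3
  have hs : (↑A : Set V3) ∩ ↑T = (↑(A ∩ T) : Set V3) ∩ ↑T := by
    rw [Finset.coe_inter, Set.inter_assoc, Set.inter_self]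
  simp only [hs]

lemma intFilled3_restrict (a b c r : ℕ) (T A : Finset V3) :
    IntFilled3 a b c r T A ↔ IntFilled3 a b c r T (A ∩ T) := by
  unfold IntFilled3
  rw [closure3_restrict]

lemma intFilled3_self (a b c r : ℕ) (T : Finset V3) : IntFilled3 a b c r T T :=
  Set.Subset.antisymm closure3_subset_region
    (fun v hv => inter_subset_closure3 ⟨hv, hv⟩)

lemma probOn_pos (hp0 : 0 < p) (hp1 : p ≤ 1) (T : Finset V3) {F : Finset V3 → Prop}
    (hFT : F T) : 0 < probOn p T F := by
  have hterm : p ^ T.card * (1 - p) ^ (T.card - T.card) ≤ probOn p T F := by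
    have := Finset.single_le_sum (f := fun A : Finset V3 =>
      if F A then p ^ A.card * (1 - p) ^ (T.card - A.card) else 0)
      (fun A _ => by
        beta_reduce
        split
        · exact mul_nonneg (pow_nonneg hp0.le _) (pow_nonneg (by linarith) _)
        · exact le_refl 0)
      (Finset.mem_powerset_self T)
    beta_reduce at this
    rwa [if_pos hFT] at this
  have : 0 < p ^ T.card * (1 - p) ^ (T.card - T.card) := by
    rw [Nat.sub_self, pow_zero, mul_one]
    positivity
  linarith

/-- the row embedding for case (i) -/
def rphi1 (h x : ℕ) : ℕ → V3 := fun z => (((x : ℤ), ((h : ℤ) + 1, (z : ℤ))) : V3)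

lemma rphi1_inj (h x : ℕ) : Function.Injective (rphi1 h x) := by
  intro m n hmn
  simp only [rphi1, Prod.ext_iff] at hmn
  exact_mod_cast hmn.2.2

/-- the row for case (i) -/
def row1 (h w x : ℕ) : Finset V3 := (Finset.Icc 1 w).image (rphi1 h x)

lemma layer_i (l h w : ℕ) :
    block3 l (h + 1) w = block3 l h w ∪ (Finset.Icc 1 l).biUnion (row1 h w) := by
  ext v
  obtain ⟨vx, vy, vz⟩ := v
  simp only [mem_block3, Finset.mem_union, Finset.mem_biUnion, row1, Finset.mem_image,
    Finset.mem_Icc, rphi1]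
  constructor
  · rintro ⟨h1, h2, h3, h4, h5, h6⟩
    by_cases hy : vy ≤ (h : ℤ)
    · exact Or.inl ⟨h1, h2, h3, hy, h5, h6⟩
    · refine Or.inr ⟨vx.toNat, ⟨by omega, by omega⟩, vz.toNat, ⟨by omega, by omega⟩, ?_⟩
      simp only [Prod.ext_iff]
      push_cast at h4 ⊢
      omega
  · rintro (⟨h1, h2, h3, h4, h5, h6⟩ | ⟨x, hx, z, hz, hEq⟩)
    · push_cast
      omega
    · simp only [Prod.ext_iff] at hEq
      obtain ⟨e1, e2, e3⟩ := hEq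
      subst e1; subst e2; subst e3
      push_cast
      omega

lemma layer_i_disj (l h w : ℕ) :
    Disjoint (block3 l h w) ((Finset.Icc 1 l).biUnion (row1 h w)) := by
  rw [Finset.disjoint_left]
  intro v hv hv'
  obtain ⟨vx, vy, vz⟩ := v
  simp only [mem_block3] at hv
  simp only [Finset.mem_biUnion, row1, Finset.mem_image, Finset.mem_Icc, rphi1] at hv'
  obtain ⟨x, hx, z, hz, hEq⟩ := hv'
  simp only [Prod.ext_iff] at hEq
  obtain ⟨e1, e2, e3⟩ := hEq
  omega

lemma rows1_disj (l h w : ℕ) : ∀ x ∈ Finset.Icc 1 l, ∀ x' ∈ Finset.Icc 1 l, x ≠ x' →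
    Disjoint (row1 h w x) (row1 h w x') := by
  intro x _ x' _ hxx'
  rw [Finset.disjoint_left]
  intro v hv hv'
  simp only [row1, Finset.mem_image, Finset.mem_Icc, rphi1] at hv hv'
  obtain ⟨z, hz, rfl⟩ := hv
  obtain ⟨z', hz', hEq⟩ := hv'
  simp only [Prod.ext_iff] at hEq
  exact hxx' (by exact_mod_cast hEq.1.symm)

lemma row1_subset_layer (l h w : ℕ) {x : ℕ} (hx : x ∈ Finset.Icc 1 l) :
    row1 h w x ⊆ (Finset.Icc 1 l).biUnion (row1 h w) :=
  Finset.subset_biUnion_of_mem (row1 h w) hx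

/-- analytic core estimate -/
lemma analytic_core (hp0 : 0 < p) (hp1 : p ≤ 1) (t n c : ℕ) (hc1 : 1 ≤ c)
    (ht1 : 1 ≤ t) (htc : t ≤ c) (htn : t ≤ n) :
    1 - Real.exp (-(1 / (2 * (c : ℝ))) * p ^ t * n) ≤ 1 - (1 - p ^ t) ^ (n / t) := by
  set q : ℝ := p ^ t with hq
  set m := n / t with hm
  have hq0 : 0 < q := pow_pos hp0 t
  have hq1 : q ≤ 1 := pow_le_one₀ hp0.le hp1
  have hnm : n ≤ 2 * c * m := by
    have hdm : t * m + n % t = n := by rw [hm]; exact Nat.div_add_mod n t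
    have hmod : n % t < t := Nat.mod_lt n (by omega)
    have hm1 : 1 ≤ m := (Nat.one_le_div_iff (by omega)).mpr htn
    have h1 : t * m ≤ m * c := by nlinarith
    have h2 : c ≤ m * c := Nat.le_mul_of_pos_left c (by omega)
    have h3 : 2 * c * m = m * c + m * c := by ring
    omega
  have hcast : (n : ℝ) ≤ 2 * c * m := by exact_mod_cast hnm
  have step1 : (1 - q) ^ m ≤ Real.exp (-q) ^ m := by
    refine pow_le_pow_left₀ (by linarith) ?_ m
    have := Real.add_one_le_exp (-q)
    linarith
  have step2 : Real.exp (-q) ^ m = Real.exp ((m : ℝ) * (-q)) := by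
    rw [← Real.exp_nat_mul]
  have step3 : Real.exp ((m : ℝ) * (-q)) ≤ Real.exp (-(1 / (2 * (c : ℝ))) * q * n) := by
    refine Real.exp_le_exp.mpr ?_
    have hc0 : (0 : ℝ) < 2 * c := by positivity
    rw [neg_mul, neg_mul, mul_neg, neg_le_neg_iff, div_mul_eq_mul_div, div_mul_eq_mul_div,
      div_le_iff₀ hc0]
    calc (1 : ℝ) * q * n = q * n := by ring
      _ ≤ q * (2 * c * m) := by
          exact mul_le_mul_of_nonneg_left hcast hq0.le
      _ = (m : ℝ) * q * (2 * c) := by ring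
  have : (1 - q) ^ m ≤ Real.exp (-(1 / (2 * (c : ℝ))) * q * n) := by
    calc (1 - q) ^ m ≤ Real.exp (-q) ^ m := step1
      _ = Real.exp ((m : ℝ) * (-q)) := step2
      _ ≤ _ := step3
  linarith

end Main
set_option maxHeartbeats 1600000 in
lemma main_i (a b c r : ℕ) (ha : 1 ≤ a) (hab : a ≤ b) (hbc : b ≤ c) (hc : c = a + b)
    (hr1 : a + c < r) (hr2 : r ≤ b + c) (p : ℝ) (hp0 : 0 < p) (hp1 : p < 1)
    (l h w : ℕ) (hl : c ≤ l) (hh : c ≤ h) (hw : c ≤ w) :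
    (1 - Real.exp (-(1 / (2 * (c : ℝ))) * p ^ (r - b) * (w : ℝ))) ^ a *
      (1 - Real.exp (-(1 / (2 * (c : ℝ))) * p ^ (r - (a + b)) * (w : ℝ))) ^ l ≤
    condProbOn p (block3 l (h + 1) w)
      (IntFilled3 a b c r (block3 l (h + 1) w))
      (IntFilled3 a b c r (block3 l h w)) := by
  have hc1 : 1 ≤ c := le_trans ha (le_trans hab hbc)
  set T : Finset V3 := block3 l h w with hT
  set S : Finset V3 := (Finset.Icc 1 l).biUnion (row1 h w) with hS
  have hsplit : block3 l (h + 1) w = T ∪ S := layer_i l h w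
  have hTS : Disjoint T S := layer_i_disj l h w
  set α : ℝ := 1 - Real.exp (-(1 / (2 * (c : ℝ))) * p ^ (r - b) * (w : ℝ)) with hα
  set β : ℝ := 1 - Real.exp (-(1 / (2 * (c : ℝ))) * p ^ (r - (a + b)) * (w : ℝ)) with hβ
  have hα0 : 0 ≤ α := by
    rw [hα, sub_nonneg]
    refine Real.exp_le_one_iff.mpr ?_
    have h1 : (0:ℝ) ≤ 1 / (2 * (c:ℝ)) * p ^ (r - b) * w := by positivity
    have h2 : -(1 / (2 * (c:ℝ))) * p ^ (r - b) * w
        = -(1 / (2 * (c:ℝ)) * p ^ (r - b) * w) := by ring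
    rw [h2]
    linarith
  have hβ0 : 0 ≤ β := by
    rw [hβ, sub_nonneg]
    refine Real.exp_le_one_iff.mpr ?_
    have h1 : (0:ℝ) ≤ 1 / (2 * (c:ℝ)) * p ^ (r - (a + b)) * w := by positivity
    have h2 : -(1 / (2 * (c:ℝ))) * p ^ (r - (a + b)) * w
        = -(1 / (2 * (c:ℝ)) * p ^ (r - (a + b)) * w) := by ring
    rw [h2]
    linarith
  have hβ1 : β ≤ 1 := by
    rw [hβ]
    have := Real.exp_pos (-(1 / (2 * (c : ℝ))) * p ^ (r - (a + b)) * (w : ℝ))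
    linarith
  -- the per-row events
  set Hrow : ℕ → Finset V3 → Prop := fun x u =>
    ∃ j ∈ Finset.range (w / tx1 a b c r x),
      (Finset.Icc (tx1 a b c r x * j + 1) (tx1 a b c r x * j + tx1 a b c r x)).image
        (rphi1 h x) ⊆ u with hHrow
  have htx1 : ∀ x : ℕ, 1 ≤ tx1 a b c r x ∧ tx1 a b c r x ≤ c := by
    intro x
    rw [tx1]
    split <;> omega
  -- denominator
  have hden_eq : probOn p (T ∪ S) (fun A => IntFilled3 a b c r T A)
      = probOn p T (fun s => IntFilled3 a b c r T s) := by
    have e1 : probOn p (T ∪ S) (fun A => IntFilled3 a b c r T A)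
        = probOn p (T ∪ S) (fun A => (fun s => IntFilled3 a b c r T s) (A ∩ T)) :=
      probOn_congr _ fun A _ => intFilled3_restrict a b c r T A
    rw [e1, probOn_marginal hTS]
  have hden_pos : 0 < probOn p T (fun s => IntFilled3 a b c r T s) :=
    probOn_pos hp0 hp1.le T (intFilled3_self a b c r T)
  -- the seed event implies filling
  have hdet : ∀ A : Finset V3, A ∈ (T ∪ S).powerset →
      (IntFilled3 a b c r T (A ∩ T) ∧
        (fun u => ∀ x ∈ Finset.Icc 1 l, Hrow x (u ∩ row1 h w x)) (A ∩ S)) →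
      (IntFilled3 a b c r (T ∪ S) A ∧ IntFilled3 a b c r T A) := by
    rintro A _ ⟨hf, hg⟩
    have hFA : IntFilled3 a b c r T A := (intFilled3_restrict a b c r T A).mpr hf
    refine ⟨?_, hFA⟩
    have hG : ∀ x : ℕ, 1 ≤ x → x ≤ l → ∃ s : ℕ, 1 ≤ s ∧ s + tx1 a b c r x ≤ w + 1 ∧
        ∀ k : ℕ, k < tx1 a b c r x →
          (((x : ℤ), ((h : ℤ) + 1, ((s + k : ℕ) : ℤ))) : V3) ∈ A := by
      intro x hx1 hxl
      obtain ⟨j, hj, hsub⟩ := hg x (Finset.mem_Icc.mpr ⟨hx1, hxl⟩)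
      set t := tx1 a b c r x with ht
      refine ⟨t * j + 1, by omega, ?_, ?_⟩
      · have hjm : j < w / t := Finset.mem_range.mp hj
        have h1 : (j + 1) * t ≤ (w / t) * t := Nat.mul_le_mul_right t hjm
        have h2 : (w / t) * t ≤ w := Nat.div_mul_le_self w t
        nlinarith
      · intro k hk
        have hmem : rphi1 h x (t * j + 1 + k)
            ∈ (Finset.Icc (t * j + 1) (t * j + t)).image (rphi1 h x) :=
          Finset.mem_image.mpr ⟨t * j + 1 + k, Finset.mem_Icc.mpr ⟨by omega, by omega⟩, rfl⟩
        have := hsub hmem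
        exact Finset.mem_of_mem_inter_left (Finset.mem_of_mem_inter_left this)
    have := det_i a b c r ha hab hbc hc hr1 hr2 l h w hl hh hw A hFA hG
    rwa [hsplit] at this
  have hmono : probOn p (T ∪ S) (fun A => IntFilled3 a b c r T (A ∩ T) ∧
        (fun u => ∀ x ∈ Finset.Icc 1 l, Hrow x (u ∩ row1 h w x)) (A ∩ S))
      ≤ probOn p (T ∪ S) (fun A => IntFilled3 a b c r (T ∪ S) A ∧ IntFilled3 a b c r T A) :=
    probOn_mono hp0.le hp1.le _ hdet
  have hsplit_prob : probOn p (T ∪ S) (fun A => IntFilled3 a b c r T (A ∩ T) ∧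
        (fun u => ∀ x ∈ Finset.Icc 1 l, Hrow x (u ∩ row1 h w x)) (A ∩ S))
      = probOn p T (fun s => IntFilled3 a b c r T s) *
        probOn p S (fun u => ∀ x ∈ Finset.Icc 1 l, Hrow x (u ∩ row1 h w x)) :=
    probOn_split hTS (fun s => IntFilled3 a b c r T s)
      (fun u => ∀ x ∈ Finset.Icc 1 l, Hrow x (u ∩ row1 h w x))
  have hS_prob : probOn p S (fun u => ∀ x ∈ Finset.Icc 1 l, Hrow x (u ∩ row1 h w x))
      = ∏ x ∈ Finset.Icc 1 l, (1 - (1 - p ^ tx1 a b c r x) ^ (w / tx1 a b c r x)) := by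
    rw [hS, probOn_prod (rows1_disj l h w) Hrow]
    refine Finset.prod_congr rfl fun x _ => ?_
    exact row_prob (rphi1 h x) (rphi1_inj h x) w (tx1 a b c r x)
  -- analytic lower bound for the product
  have hfac : ∀ x ∈ Finset.Icc 1 l, (if x ≤ a then α else β)
      ≤ 1 - (1 - p ^ tx1 a b c r x) ^ (w / tx1 a b c r x) := by
    intro x _
    by_cases hxa : x ≤ a
    · rw [if_pos hxa]
      have htx : tx1 a b c r x = r - b := by rw [tx1, if_pos hxa]
      rw [htx, hα]
      exact analytic_core hp0 hp1.le (r - b) w c hc1 (by omega) (by omega) (by omega)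
    · rw [if_neg hxa]
      have htx : tx1 a b c r x = r - c := by rw [tx1, if_neg hxa]
      have he : r - (a + b) = r - c := by omega
      rw [htx, hβ, he]
      exact analytic_core hp0 hp1.le (r - c) w c hc1 (by omega) (by omega) (by omega)
  have hite_nonneg : ∀ x ∈ Finset.Icc 1 l, (0:ℝ) ≤ (if x ≤ a then α else β) := by
    intro x _
    split <;> assumption
  have hprod2 : ∏ x ∈ Finset.Icc 1 l, (if x ≤ a then α else β)
      ≤ ∏ x ∈ Finset.Icc 1 l, (1 - (1 - p ^ tx1 a b c r x) ^ (w / tx1 a b c r x)) :=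
    Finset.prod_le_prod hite_nonneg hfac
  have hprod1 : α ^ a * β ^ l ≤ ∏ x ∈ Finset.Icc 1 l, (if x ≤ a then α else β) := by
    have hfa : (Finset.Icc 1 l).filter (fun x => x ≤ a) = Finset.Icc 1 a := by
      ext x
      simp only [Finset.mem_filter, Finset.mem_Icc]
      omega
    have hfb : (Finset.Icc 1 l).filter (fun x => ¬ x ≤ a) = Finset.Icc (a+1) l := by
      ext x
      simp only [Finset.mem_filter, Finset.mem_Icc]
      omega
    rw [Finset.prod_ite, Finset.prod_const, Finset.prod_const, hfa, hfb,
      Nat.card_Icc, Nat.card_Icc]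
    have e1 : a + 1 - 1 = a := by omega
    have e2 : l + 1 - (a + 1) = l - a := by omega
    rw [e1, e2]
    refine mul_le_mul_of_nonneg_left ?_ (pow_nonneg hα0 a)
    exact pow_le_pow_of_le_one hβ0 hβ1 (by omega)
  -- put it together
  rw [condProbOn, hsplit]
  rw [le_div_iff₀ (by rw [hden_eq]; exact hden_pos)]
  calc α ^ a * β ^ l * probOn p (T ∪ S) (fun A => IntFilled3 a b c r T A)
      = probOn p (T ∪ S) (fun A => IntFilled3 a b c r T A) * (α ^ a * β ^ l) := by ring
    _ ≤ probOn p (T ∪ S) (fun A => IntFilled3 a b c r T A) *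
        probOn p S (fun u => ∀ x ∈ Finset.Icc 1 l, Hrow x (u ∩ row1 h w x)) := by
        refine mul_le_mul_of_nonneg_left ?_ (probOn_nonneg hp0.le hp1.le _ _)
        rw [hS_prob]
        exact le_trans hprod1 hprod2
    _ = probOn p T (fun s => IntFilled3 a b c r T s) *
        probOn p S (fun u => ∀ x ∈ Finset.Icc 1 l, Hrow x (u ∩ row1 h w x)) := by
        rw [hden_eq]
    _ = probOn p (T ∪ S) (fun A => IntFilled3 a b c r T (A ∩ T) ∧
          (fun u => ∀ x ∈ Finset.Icc 1 l, Hrow x (u ∩ row1 h w x)) (A ∩ S)) := hsplit_prob.symm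
    _ ≤ probOn p (T ∪ S) (fun A => IntFilled3 a b c r (T ∪ S) A ∧ IntFilled3 a b c r T A) := hmono
/-- the row embedding for case (ii) -/
def rphi2 (w x : ℕ) : ℕ → V3 := fun z => (((x : ℤ), ((z : ℤ), (w : ℤ) + 1)) : V3)

lemma rphi2_inj (w x : ℕ) : Function.Injective (rphi2 w x) := by
  intro m n hmn
  simp only [rphi2, Prod.ext_iff] at hmn
  exact_mod_cast hmn.2.1

/-- the row for case (ii) -/
def row2 (w h x : ℕ) : Finset V3 := (Finset.Icc 1 h).image (rphi2 w x)

lemma layer_ii (l h w : ℕ) :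
    block3 l h (w + 1) = block3 l h w ∪ (Finset.Icc 1 l).biUnion (row2 w h) := by
  ext v
  obtain ⟨vx, vy, vz⟩ := v
  simp only [mem_block3, Finset.mem_union, Finset.mem_biUnion, row2, Finset.mem_image,
    Finset.mem_Icc, rphi2]
  constructor
  · rintro ⟨h1, h2, h3, h4, h5, h6⟩
    by_cases hz : vz ≤ (w : ℤ)
    · exact Or.inl ⟨h1, h2, h3, h4, h5, hz⟩
    · refine Or.inr ⟨vx.toNat, ⟨by omega, by omega⟩, vy.toNat, ⟨by omega, by omega⟩, ?_⟩
      simp only [Prod.ext_iff]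
      push_cast at h6 ⊢
      omega
  · rintro (⟨h1, h2, h3, h4, h5, h6⟩ | ⟨x, hx, z, hz, hEq⟩)
    · push_cast
      omega
    · simp only [Prod.ext_iff] at hEq
      obtain ⟨e1, e2, e3⟩ := hEq
      subst e1; subst e2; subst e3
      push_cast
      omega

lemma layer_ii_disj (l h w : ℕ) :
    Disjoint (block3 l h w) ((Finset.Icc 1 l).biUnion (row2 w h)) := by
  rw [Finset.disjoint_left]
  intro v hv hv'
  obtain ⟨vx, vy, vz⟩ := v
  simp only [mem_block3] at hv
  simp only [Finset.mem_biUnion, row2, Finset.mem_image, Finset.mem_Icc, rphi2] at hv'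
  obtain ⟨x, hx, z, hz, hEq⟩ := hv'
  simp only [Prod.ext_iff] at hEq
  obtain ⟨e1, e2, e3⟩ := hEq
  omega

lemma rows2_disj (l h w : ℕ) : ∀ x ∈ Finset.Icc 1 l, ∀ x' ∈ Finset.Icc 1 l, x ≠ x' →
    Disjoint (row2 w h x) (row2 w h x') := by
  intro x _ x' _ hxx'
  rw [Finset.disjoint_left]
  intro v hv hv'
  simp only [row2, Finset.mem_image, Finset.mem_Icc, rphi2] at hv hv'
  obtain ⟨z, hz, rfl⟩ := hv
  obtain ⟨z', hz', hEq⟩ := hv'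
  simp only [Prod.ext_iff] at hEq
  exact hxx' (by exact_mod_cast hEq.1.symm)

set_option maxHeartbeats 1600000 in
lemma main_ii (a b c r : ℕ) (ha : 1 ≤ a) (hab : a ≤ b) (hbc : b ≤ c) (hc : c = a + b)
    (hr1 : a + c < r) (hr2 : r ≤ b + c) (p : ℝ) (hp0 : 0 < p) (hp1 : p < 1)
    (l h w : ℕ) (hl : c ≤ l) (hh : c ≤ h) (hw : c ≤ w) :
    (1 - Real.exp (-(1 / (2 * (c : ℝ))) * p ^ (r - c) * (h : ℝ))) ^ a *
      (1 - Real.exp (-(1 / (2 * (c : ℝ))) * p ^ (r - (a + c)) * (h : ℝ))) ^ l ≤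
    condProbOn p (block3 l h (w + 1))
      (IntFilled3 a b c r (block3 l h (w + 1)))
      (IntFilled3 a b c r (block3 l h w)) := by
  have hc1 : 1 ≤ c := le_trans ha (le_trans hab hbc)
  set T : Finset V3 := block3 l h w with hT
  set S : Finset V3 := (Finset.Icc 1 l).biUnion (row2 w h) with hS
  have hsplit : block3 l h (w + 1) = T ∪ S := layer_ii l h w
  have hTS : Disjoint T S := layer_ii_disj l h w
  set α : ℝ := 1 - Real.exp (-(1 / (2 * (c : ℝ))) * p ^ (r - c) * (h : ℝ)) with hα
  set β : ℝ := 1 - Real.exp (-(1 / (2 * (c : ℝ))) * p ^ (r - (a + c)) * (h : ℝ)) with hβ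
  have hα0 : 0 ≤ α := by
    rw [hα, sub_nonneg]
    refine Real.exp_le_one_iff.mpr ?_
    have h1 : (0:ℝ) ≤ 1 / (2 * (c:ℝ)) * p ^ (r - c) * h := by positivity
    have h2 : -(1 / (2 * (c:ℝ))) * p ^ (r - c) * h
        = -(1 / (2 * (c:ℝ)) * p ^ (r - c) * h) := by ring
    rw [h2]
    linarith
  have hβ0 : 0 ≤ β := by
    rw [hβ, sub_nonneg]
    refine Real.exp_le_one_iff.mpr ?_
    have h1 : (0:ℝ) ≤ 1 / (2 * (c:ℝ)) * p ^ (r - (a + c)) * h := by positivity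
    have h2 : -(1 / (2 * (c:ℝ))) * p ^ (r - (a + c)) * h
        = -(1 / (2 * (c:ℝ)) * p ^ (r - (a + c)) * h) := by ring
    rw [h2]
    linarith
  have hβ1 : β ≤ 1 := by
    rw [hβ]
    have := Real.exp_pos (-(1 / (2 * (c : ℝ))) * p ^ (r - (a + c)) * (h : ℝ))
    linarith
  set Hrow : ℕ → Finset V3 → Prop := fun x u =>
    ∃ j ∈ Finset.range (h / tx2 a c r x),
      (Finset.Icc (tx2 a c r x * j + 1) (tx2 a c r x * j + tx2 a c r x)).image
        (rphi2 w x) ⊆ u with hHrow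
  have hden_eq : probOn p (T ∪ S) (fun A => IntFilled3 a b c r T A)
      = probOn p T (fun s => IntFilled3 a b c r T s) := by
    have e1 : probOn p (T ∪ S) (fun A => IntFilled3 a b c r T A)
        = probOn p (T ∪ S) (fun A => (fun s => IntFilled3 a b c r T s) (A ∩ T)) :=
      probOn_congr _ fun A _ => intFilled3_restrict a b c r T A
    rw [e1, probOn_marginal hTS]
  have hden_pos : 0 < probOn p T (fun s => IntFilled3 a b c r T s) :=
    probOn_pos hp0 hp1.le T (intFilled3_self a b c r T)
  have hdet : ∀ A : Finset V3, A ∈ (T ∪ S).powerset →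
      (IntFilled3 a b c r T (A ∩ T) ∧
        (fun u => ∀ x ∈ Finset.Icc 1 l, Hrow x (u ∩ row2 w h x)) (A ∩ S)) →
      (IntFilled3 a b c r (T ∪ S) A ∧ IntFilled3 a b c r T A) := by
    rintro A _ ⟨hf, hg⟩
    have hFA : IntFilled3 a b c r T A := (intFilled3_restrict a b c r T A).mpr hf
    refine ⟨?_, hFA⟩
    have hG : ∀ x : ℕ, 1 ≤ x → x ≤ l → ∃ s : ℕ, 1 ≤ s ∧ s + tx2 a c r x ≤ h + 1 ∧
        ∀ k : ℕ, k < tx2 a c r x →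
          (((x : ℤ), (((s + k : ℕ) : ℤ), (w : ℤ) + 1)) : V3) ∈ A := by
      intro x hx1 hxl
      obtain ⟨j, hj, hsub⟩ := hg x (Finset.mem_Icc.mpr ⟨hx1, hxl⟩)
      set t := tx2 a c r x with ht
      refine ⟨t * j + 1, by omega, ?_, ?_⟩
      · have hjm : j < h / t := Finset.mem_range.mp hj
        have h1 : (j + 1) * t ≤ (h / t) * t := Nat.mul_le_mul_right t hjm
        have h2 : (h / t) * t ≤ h := Nat.div_mul_le_self h t
        nlinarith
      · intro k hk
        have hmem : rphi2 w x (t * j + 1 + k)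
            ∈ (Finset.Icc (t * j + 1) (t * j + t)).image (rphi2 w x) :=
          Finset.mem_image.mpr ⟨t * j + 1 + k, Finset.mem_Icc.mpr ⟨by omega, by omega⟩, rfl⟩
        have := hsub hmem
        exact Finset.mem_of_mem_inter_left (Finset.mem_of_mem_inter_left this)
    have := det_ii a b c r ha hab hbc hc hr1 hr2 l h w hl hh hw A hFA hG
    rwa [hsplit] at this
  have hmono : probOn p (T ∪ S) (fun A => IntFilled3 a b c r T (A ∩ T) ∧
        (fun u => ∀ x ∈ Finset.Icc 1 l, Hrow x (u ∩ row2 w h x)) (A ∩ S))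
      ≤ probOn p (T ∪ S) (fun A => IntFilled3 a b c r (T ∪ S) A ∧ IntFilled3 a b c r T A) :=
    probOn_mono hp0.le hp1.le _ hdet
  have hsplit_prob : probOn p (T ∪ S) (fun A => IntFilled3 a b c r T (A ∩ T) ∧
        (fun u => ∀ x ∈ Finset.Icc 1 l, Hrow x (u ∩ row2 w h x)) (A ∩ S))
      = probOn p T (fun s => IntFilled3 a b c r T s) *
        probOn p S (fun u => ∀ x ∈ Finset.Icc 1 l, Hrow x (u ∩ row2 w h x)) :=
    probOn_split hTS (fun s => IntFilled3 a b c r T s)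
      (fun u => ∀ x ∈ Finset.Icc 1 l, Hrow x (u ∩ row2 w h x))
  have hS_prob : probOn p S (fun u => ∀ x ∈ Finset.Icc 1 l, Hrow x (u ∩ row2 w h x))
      = ∏ x ∈ Finset.Icc 1 l, (1 - (1 - p ^ tx2 a c r x) ^ (h / tx2 a c r x)) := by
    rw [hS, probOn_prod (rows2_disj l h w) Hrow]
    refine Finset.prod_congr rfl fun x _ => ?_
    exact row_prob (rphi2 w x) (rphi2_inj w x) h (tx2 a c r x)
  have hfac : ∀ x ∈ Finset.Icc 1 l, (if x ≤ a then α else β)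
      ≤ 1 - (1 - p ^ tx2 a c r x) ^ (h / tx2 a c r x) := by
    intro x _
    by_cases hxa : x ≤ a
    · rw [if_pos hxa]
      have htx : tx2 a c r x = r - c := by rw [tx2, if_pos hxa]
      rw [htx, hα]
      exact analytic_core hp0 hp1.le (r - c) h c hc1 (by omega) (by omega) (by omega)
    · rw [if_neg hxa]
      have htx : tx2 a c r x = r - (a + c) := by rw [tx2, if_neg hxa]
      rw [htx, hβ]
      exact analytic_core hp0 hp1.le (r - (a + c)) h c hc1 (by omega) (by omega) (by omega)
  have hite_nonneg : ∀ x ∈ Finset.Icc 1 l, (0:ℝ) ≤ (if x ≤ a then α else β) := by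
    intro x _
    split <;> assumption
  have hprod2 : ∏ x ∈ Finset.Icc 1 l, (if x ≤ a then α else β)
      ≤ ∏ x ∈ Finset.Icc 1 l, (1 - (1 - p ^ tx2 a c r x) ^ (h / tx2 a c r x)) :=
    Finset.prod_le_prod hite_nonneg hfac
  have hprod1 : α ^ a * β ^ l ≤ ∏ x ∈ Finset.Icc 1 l, (if x ≤ a then α else β) := by
    have hfa : (Finset.Icc 1 l).filter (fun x => x ≤ a) = Finset.Icc 1 a := by
      ext x
      simp only [Finset.mem_filter, Finset.mem_Icc]
      omega
    have hfb : (Finset.Icc 1 l).filter (fun x => ¬ x ≤ a) = Finset.Icc (a+1) l := by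
      ext x
      simp only [Finset.mem_filter, Finset.mem_Icc]
      omega
    rw [Finset.prod_ite, Finset.prod_const, Finset.prod_const, hfa, hfb,
      Nat.card_Icc, Nat.card_Icc]
    have e1 : a + 1 - 1 = a := by omega
    have e2 : l + 1 - (a + 1) = l - a := by omega
    rw [e1, e2]
    refine mul_le_mul_of_nonneg_left ?_ (pow_nonneg hα0 a)
    exact pow_le_pow_of_le_one hβ0 hβ1 (by omega)
  rw [condProbOn, hsplit]
  rw [le_div_iff₀ (by rw [hden_eq]; exact hden_pos)]
  calc α ^ a * β ^ l * probOn p (T ∪ S) (fun A => IntFilled3 a b c r T A)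
      = probOn p (T ∪ S) (fun A => IntFilled3 a b c r T A) * (α ^ a * β ^ l) := by ring
    _ ≤ probOn p (T ∪ S) (fun A => IntFilled3 a b c r T A) *
        probOn p S (fun u => ∀ x ∈ Finset.Icc 1 l, Hrow x (u ∩ row2 w h x)) := by
        refine mul_le_mul_of_nonneg_left ?_ (probOn_nonneg hp0.le hp1.le _ _)
        rw [hS_prob]
        exact le_trans hprod1 hprod2
    _ = probOn p T (fun s => IntFilled3 a b c r T s) *
        probOn p S (fun u => ∀ x ∈ Finset.Icc 1 l, Hrow x (u ∩ row2 w h x)) := by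
        rw [hden_eq]
    _ = probOn p (T ∪ S) (fun A => IntFilled3 a b c r T (A ∩ T) ∧
          (fun u => ∀ x ∈ Finset.Icc 1 l, Hrow x (u ∩ row2 w h x)) (A ∩ S)) := hsplit_prob.symm
    _ ≤ probOn p (T ∪ S) (fun A => IntFilled3 a b c r (T ∪ S) A ∧ IntFilled3 a b c r T A) := hmono

/-- growth estimates (Lemma "Regime critical `e₁`-process") for `c = a+b`
and `a+c < r ≤ b+c`. -/
theorem stmt7 (a b c r : ℕ) (ha : 1 ≤ a) (hab : a ≤ b) (hbc : b ≤ c) (hc : c = a + b)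
    (hr1 : a + c < r) (hr2 : r ≤ b + c) :
    ∃ κ p₀ : ℝ, 0 < κ ∧ 0 < p₀ ∧ ∀ p : ℝ, 0 < p → p < p₀ →
      ∀ l h w : ℕ, c ≤ l → c ≤ h → c ≤ w →
        ((1 - Real.exp (-κ * p ^ (r - b) * (w : ℝ))) ^ a *
            (1 - Real.exp (-κ * p ^ (r - (a + b)) * (w : ℝ))) ^ l ≤
          condProbOn p (block3 l (h + 1) w)
            (IntFilled3 a b c r (block3 l (h + 1) w))
            (IntFilled3 a b c r (block3 l h w))) ∧
        ((1 - Real.exp (-κ * p ^ (r - c) * (h : ℝ))) ^ a *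
            (1 - Real.exp (-κ * p ^ (r - (a + c)) * (h : ℝ))) ^ l ≤
          condProbOn p (block3 l h (w + 1))
            (IntFilled3 a b c r (block3 l h (w + 1)))
            (IntFilled3 a b c r (block3 l h w))) := by
  have hc1 : 1 ≤ c := le_trans ha (le_trans hab hbc)
  refine ⟨1 / (2 * (c : ℝ)), 1, by positivity, one_pos, ?_⟩
  intro p hp0 hp1 l h w hl hh hw
  exact ⟨main_i a b c r ha hab hbc hc hr1 hr2 p hp0 hp1 l h w hl hh hw,
    main_ii a b c r ha hab hbc hc hr1 hr2 p hp0 hp1 l h w hl hh hw⟩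
end

section
/- Let 1 ≤ a ≤ b ≤ c be integers and let r be an integer with c+3 ≤ r ≤ a+c; set s = r−c. Fix m ∈ {0,1,…,s}. Then there exist constants κ > 0 and p₀ > 0 such that for all 0 < p < p₀ and all integers l, h, w ≥ c with p^{−m} < h ≤ p^{−(m+1)}: ℙ_p(I(l,h,w+1) | I(l,h,w)) ≥ 1 − exp(−κ·h^{s−m}·l·p^{Σ_{i=m+1}^{s} i}). -/
open Finset
open scoped Classical

namespace Stmt9

abbrev V3 := ℤ × ℤ × ℤ

variable {a b c r : ℕ} {R R' A A' : Set V3}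

lemma mem_closure3 {v : V3} : v ∈ closure3 a b c r R A ↔
    ∀ B : Set V3, (A ∩ R ⊆ B ∧ ∀ u ∈ R, r ≤ infCount3 a b c R B u → u ∈ B) → v ∈ B := by
  simp [closure3, Set.mem_sInter, Set.mem_setOf_eq]

lemma closure3_subset : closure3 a b c r R A ⊆ R := fun v hv =>
  mem_closure3.1 hv R ⟨Set.inter_subset_right, fun u hu _ => hu⟩

lemma infCount3_mono {B B' : Set V3} (h : B ⊆ B') (v : V3) :
    infCount3 a b c R B v ≤ infCount3 a b c R B' v := by
  apply Finset.card_le_card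
  intro x hx
  simp only [Finset.mem_filter] at *
  exact ⟨hx.1, hx.2.1, h hx.2.2⟩

lemma infCount3_mono_R (hR : R ⊆ R') {B : Set V3} (v : V3) :
    infCount3 a b c R B v ≤ infCount3 a b c R' B v := by
  apply Finset.card_le_card
  intro x hx
  simp only [Finset.mem_filter] at *
  exact ⟨hx.1, hR hx.2.1, hx.2.2⟩

lemma subset_closure3 : A ∩ R ⊆ closure3 a b c r R A := fun v hv =>
  Set.mem_sInter.2 fun B hB => hB.1 hv

lemma closure3_infect {v : V3} (hv : v ∈ R)
    (h : r ≤ infCount3 a b c R (closure3 a b c r R A) v) : v ∈ closure3 a b c r R A := by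
  refine Set.mem_sInter.2 fun B hB => ?_
  exact hB.2 v hv (le_trans h (infCount3_mono (fun u hu => Set.mem_sInter.1 hu B hB) v))

lemma closure3_mono_R (hR : R ⊆ R') : closure3 a b c r R A ⊆ closure3 a b c r R' A := by
  intro v hv
  refine mem_closure3.1 hv _ ⟨?_, ?_⟩
  · exact fun u hu => subset_closure3 ⟨hu.1, hR hu.2⟩
  · intro u hu hcount
    exact closure3_infect (hR hu) (le_trans hcount (infCount3_mono_R hR u))

lemma closure3_congr (h : A ∩ R = A' ∩ R) : closure3 a b c r R A = closure3 a b c r R A' := by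
  simp only [closure3, h]

end Stmt9
namespace Stmt9

variable {a b c r : ℕ} {R A : Set V3}

lemma infect_step {v : V3} (hv : v ∈ R) (u₁ u₂ : ℕ) (ε₁ ε₂ : ℤ)
    (hε₁ : ε₁ = 1 ∨ ε₁ = -1) (hε₂ : ε₂ = 1 ∨ ε₂ = -1)
    (hu₁ : u₁ ≤ a) (hu₂ : u₂ ≤ b) (hr : r ≤ u₁ + u₂ + c)
    (h₁ : ∀ d : ℕ, 1 ≤ d → d ≤ u₁ →
      v + ((ε₁ * d, 0, 0) : V3) ∈ R ∧ v + ((ε₁ * d, 0, 0) : V3) ∈ closure3 a b c r R A)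
    (h₂ : ∀ d : ℕ, 1 ≤ d → d ≤ u₂ →
      v + ((0, ε₂ * d, 0) : V3) ∈ R ∧ v + ((0, ε₂ * d, 0) : V3) ∈ closure3 a b c r R A)
    (h₃ : ∀ d : ℕ, 1 ≤ d → d ≤ c →
      v + ((0, 0, -(d:ℤ)) : V3) ∈ R ∧ v + ((0, 0, -(d:ℤ)) : V3) ∈ closure3 a b c r R A) :
    v ∈ closure3 a b c r R A := by
  have hne₁ : ε₁ ≠ 0 := by rcases hε₁ with h|h <;> simp [h]
  have hne₂ : ε₂ ≠ 0 := by rcases hε₂ with h|h <;> simp [h]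
  apply closure3_infect hv
  set C := closure3 a b c r R A with hC
  set T : Finset V3 := (((Finset.Icc 1 u₁).image fun d : ℕ => ((ε₁ * d, 0, 0) : V3)) ∪
    ((Finset.Icc 1 u₂).image fun d : ℕ => ((0, ε₂ * d, 0) : V3))) ∪
    ((Finset.Icc 1 c).image fun d : ℕ => ((0, 0, -(d:ℤ)) : V3)) with hT
  have habs : ∀ (ε : ℤ) (d : ℕ), ε = 1 ∨ ε = -1 → 1 ≤ d → (ε * d ≠ 0) := by
    rintro ε d (rfl|rfl) hd <;> simp <;> omega
  have hTsub : T ⊆ (nbhd3 a b c).filter fun x => v + x ∈ R ∧ v + x ∈ C := by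
    intro x hx
    simp only [hT, Finset.mem_union, Finset.mem_image, Finset.mem_Icc] at hx
    rcases hx with (⟨d, ⟨hd1, hd2⟩, rfl⟩ | ⟨d, ⟨hd1, hd2⟩, rfl⟩) | ⟨d, ⟨hd1, hd2⟩, rfl⟩
    · refine Finset.mem_filter.2 ⟨?_, h₁ d hd1 hd2⟩
      simp only [nbhd3, Finset.mem_union]
      refine Or.inl (Or.inl (Finset.mem_image.2 ⟨ε₁ * d, ?_, rfl⟩))
      refine Finset.mem_erase.2 ⟨habs _ _ hε₁ hd1, Finset.mem_Icc.2 ?_⟩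
      have : (d : ℤ) ≤ a := by exact_mod_cast le_trans hd2 hu₁
      have : (1 : ℤ) ≤ d := by exact_mod_cast hd1
      rcases hε₁ with rfl|rfl <;> constructor <;> omega
    · refine Finset.mem_filter.2 ⟨?_, h₂ d hd1 hd2⟩
      simp only [nbhd3, Finset.mem_union]
      refine Or.inl (Or.inr (Finset.mem_image.2 ⟨ε₂ * d, ?_, rfl⟩))
      refine Finset.mem_erase.2 ⟨habs _ _ hε₂ hd1, Finset.mem_Icc.2 ?_⟩
      have : (d : ℤ) ≤ b := by exact_mod_cast le_trans hd2 hu₂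
      have : (1 : ℤ) ≤ d := by exact_mod_cast hd1
      rcases hε₂ with rfl|rfl <;> constructor <;> omega
    · refine Finset.mem_filter.2 ⟨?_, h₃ d hd1 hd2⟩
      simp only [nbhd3, Finset.mem_union]
      refine Or.inr (Finset.mem_image.2 ⟨-(d:ℤ), ?_, rfl⟩)
      refine Finset.mem_erase.2 ⟨by omega, Finset.mem_Icc.2 ?_⟩
      have : (d : ℤ) ≤ c := by exact_mod_cast hd2
      have : (1 : ℤ) ≤ d := by exact_mod_cast hd1
      constructor <;> omega
  have hinj : ∀ (ε : ℤ), ε ≠ 0 → Function.Injective (fun d : ℕ => (ε * d : ℤ)) := by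
    intro ε hε d d' h
    simpa using mul_left_cancel₀ hε h
  have hcard : T.card = u₁ + u₂ + c := by
    rw [hT, Finset.card_union_of_disjoint, Finset.card_union_of_disjoint]
    · rw [Finset.card_image_of_injective _ (fun d d' h => hinj ε₁ hne₁ (by simpa using congrArg Prod.fst h)),
        Finset.card_image_of_injective _ (fun d d' h => hinj ε₂ hne₂ (by simpa using (congrArg (fun z : V3 => z.2.1) h))),
        Nat.card_Icc, Nat.card_Icc]
      have h3inj : Function.Injective (fun d : ℕ => ((0, 0, -(d:ℤ)) : V3)) := by
        intro d d' h
        have := congrArg (fun z : V3 => z.2.2) h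
        simp at this
        omega
      rw [Finset.card_image_of_injective _ h3inj, Nat.card_Icc]
      omega
    · rw [Finset.disjoint_left]
      rintro x hx1 hx2
      simp only [Finset.mem_image, Finset.mem_Icc] at hx1 hx2
      obtain ⟨d, ⟨hd1, -⟩, rfl⟩ := hx1
      obtain ⟨d', ⟨hd1', -⟩, he⟩ := hx2
      have := congrArg (fun z : V3 => z.1) he
      simp at this
      rcases this with h|h
      · exact hne₁ h
      · omega
    · rw [Finset.disjoint_left]
      rintro x hx1 hx2
      simp only [Finset.mem_union, Finset.mem_image, Finset.mem_Icc] at hx1 hx2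
      obtain ⟨d', ⟨hd1', -⟩, he⟩ := hx2
      rcases hx1 with ⟨d, ⟨hd1, -⟩, rfl⟩ | ⟨d, ⟨hd1, -⟩, rfl⟩
      · have := congrArg (fun z : V3 => z.2.2) he
        simp at this
        omega
      · have h1 := congrArg (fun z : V3 => z.2.1) he
        simp at h1
        rcases h1 with h|h
        · exact hne₂ h
        · omega
  calc r ≤ u₁ + u₂ + c := hr
    _ = T.card := hcard.symm
    _ ≤ _ := Finset.card_le_card hTsub

end Stmt9
namespace Stmt9

lemma mem_block3 {l h w : ℕ} {v : V3} : v ∈ block3 l h w ↔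
    1 ≤ v.1 ∧ v.1 ≤ l ∧ 1 ≤ v.2.1 ∧ v.2.1 ≤ h ∧ 1 ≤ v.2.2 ∧ v.2.2 ≤ w := by
  rcases v with ⟨x, y, z⟩
  simp [block3, Finset.mem_product, Finset.mem_Icc, and_assoc]

lemma fill_big (a b c r s l h w : ℕ) (hs1 : 1 ≤ s) (hsa : s ≤ a) (hab : a ≤ b) (hbc : b ≤ c)
    (hrcs : r = c + s) (hcl : c ≤ l) (hch : c ≤ h) (hcw : c ≤ w)
    (A : Finset V3) (hF : IntFilled3 a b c r (block3 l h w) A)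
    (x₀ : ℤ) (h1x : 1 ≤ x₀) (hxl : x₀ + s ≤ l + 1)
    (runs : ∀ j : ℕ, j < s → ∃ y₀ : ℤ, 0 ≤ y₀ ∧ y₀ + (s - j : ℕ) ≤ h ∧
      ∀ d : ℕ, 1 ≤ d → d ≤ s - j → ((x₀ + j, y₀ + d, (w:ℤ)+1)) ∈ A) :
    IntFilled3 a b c r (block3 l h (w+1)) A := by
  have hsc : c ≤ s + c := by omega
  set R : Set V3 := ↑(block3 l h (w+1)) with hR
  set C : Set V3 := closure3 a b c r R ↑A with hC
  have hmemR : ∀ x y z : ℤ, 1 ≤ x → x ≤ l → 1 ≤ y → y ≤ h → 1 ≤ z → z ≤ w + 1 →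
      ((x, y, z) : V3) ∈ R := by
    intro x y z h1 h2 h3 h4 h5 h6
    rw [hR, Finset.mem_coe, mem_block3]
    refine ⟨h1, h2, h3, h4, h5, by push_cast; omega⟩
  have hsmall : ∀ x y z : ℤ, 1 ≤ x → x ≤ l → 1 ≤ y → y ≤ h → 1 ≤ z → z ≤ w →
      ((x, y, z) : V3) ∈ C := by
    intro x y z h1 h2 h3 h4 h5 h6
    have hsub : (↑(block3 l h w) : Set V3) ⊆ R := by
      intro v hv
      rw [Finset.mem_coe, mem_block3] at hv
      rw [hR, Finset.mem_coe, mem_block3]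
      refine ⟨hv.1, hv.2.1, hv.2.2.1, hv.2.2.2.1, hv.2.2.2.2.1, by push_cast; omega⟩
    have : ((x,y,z) : V3) ∈ closure3 a b c r (↑(block3 l h w)) ↑A := by
      rw [hF, Finset.mem_coe, mem_block3]
      exact ⟨h1, h2, h3, h4, h5, h6⟩
    exact closure3_mono_R hsub this
  -- e₃-direction helpers from the filled small block
  have hcC : ∀ x y : ℤ, 1 ≤ x → x ≤ l → 1 ≤ y → y ≤ h → ∀ d : ℕ, 1 ≤ d → d ≤ c →
      ((x, y, (w:ℤ)+1) : V3) + ((0, 0, -(d:ℤ)) : V3) ∈ R ∧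
      ((x, y, (w:ℤ)+1) : V3) + ((0, 0, -(d:ℤ)) : V3) ∈ C := by
    intro x y h1 h2 h3 h4 d hd1 hd2
    simp only [Prod.mk_add_mk, add_zero]
    constructor
    · exact hmemR _ _ _ h1 h2 h3 h4 (by omega) (by omega)
    · exact hsmall _ _ _ h1 h2 h3 h4 (by omega) (by omega)
  -- fill the ladder columns
  have hcol : ∀ j : ℕ, j < s → ∀ y : ℤ, 1 ≤ y → y ≤ h →
      ((x₀ + j, y, (w:ℤ)+1) : V3) ∈ C := by
    intro j
    induction j using Nat.strong_induction_on with
    | _ j ih =>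
    intro hj
    obtain ⟨y₀, hy₀0, hy₀h, hrun⟩ := runs j hj
    set t : ℕ := s - j with htdef
    have ht1 : 1 ≤ t := by omega
    have hts : t ≤ s := by omega
    have hjs : (j : ℤ) < s := by exact_mod_cast hj
    have hX1 : 1 ≤ x₀ + (j:ℤ) := by omega
    have hXl : x₀ + (j:ℤ) ≤ l := by omega
    -- ih in integer form
    have ihZ : ∀ x : ℤ, x₀ ≤ x → x < x₀ + j → ∀ y : ℤ, 1 ≤ y → y ≤ h →
        ((x, y, (w:ℤ)+1) : V3) ∈ C := by
      intro x hx1 hx2 y hy1 hy2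
      have he : x = x₀ + ((x - x₀).toNat : ℤ) := by omega
      rw [he]
      exact ih (x - x₀).toNat (by omega) (by omega) y hy1 hy2
    have hmid : ∀ y : ℤ, y₀ + 1 ≤ y → y ≤ y₀ + t → ((x₀ + j, y, (w:ℤ)+1) : V3) ∈ C := by
      intro y hy1 hy2
      have he : y = y₀ + ((y - y₀).toNat : ℤ) := by omega
      rw [he]
      refine subset_closure3 ⟨Finset.mem_coe.2 (hrun (y - y₀).toNat (by omega) (by omega)), ?_⟩
      exact hmemR _ _ _ hX1 hXl (by omega) (by omega) (by omega) (by omega)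
    -- the generic infection step for this column
    have hstep : ∀ Y : ℤ, 1 ≤ Y → Y ≤ h → (ε₂ : ℤ) → ∀ hε₂ : ε₂ = 1 ∨ ε₂ = -1,
        (∀ d : ℕ, 1 ≤ d → d ≤ t → 1 ≤ Y + ε₂ * d ∧ Y + ε₂ * d ≤ h ∧
          ((x₀ + j, Y + ε₂ * d, (w:ℤ)+1) : V3) ∈ C) →
        ((x₀ + j, Y, (w:ℤ)+1) : V3) ∈ C := by
      intro Y hY1 hY2 ε₂ hε₂ hvert
      apply infect_step (hmemR _ _ _ hX1 hXl hY1 hY2 (by omega) (by omega)) j t (-1) ε₂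
        (Or.inr rfl) hε₂ (by omega) (by omega) (by omega)
      · intro d hd1 hd2
        simp only [Prod.mk_add_mk, add_zero]
        constructor
        · exact hmemR _ _ _ (by omega) (by omega) hY1 hY2 (by omega) (by omega)
        · have he : x₀ + (j:ℤ) + (-1) * d = x₀ + ((j - d : ℕ) : ℤ) := by
            have : ((j - d : ℕ) : ℤ) = (j : ℤ) - d := by omega
            omega
          rw [he]
          exact ih (j - d) (by omega) (by omega) Y hY1 hY2
      · intro d hd1 hd2
        simp only [Prod.mk_add_mk, add_zero]
        obtain ⟨q1, q2, q3⟩ := hvert d hd1 hd2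
        exact ⟨hmemR _ _ _ hX1 hXl q1 q2 (by omega) (by omega), q3⟩
      · exact hcC _ _ hX1 hXl hY1 hY2
    have hup : ∀ n : ℤ, y₀ + t ≤ n → ∀ y' : ℤ, y₀ + 1 ≤ y' → y' ≤ n → y' ≤ h →
        ((x₀ + j, y', (w:ℤ)+1) : V3) ∈ C := by
      refine Int.le_induction ?_ ?_
      · intro y' h1 h2 h3
        exact hmid y' h1 h2
      · intro n hn Pn y' h1 h2 h3
        rcases lt_or_ge n y' with hcase | hcase
        · have hy' : y' = n + 1 := by omega
          subst hy'
          refine hstep _ (by omega) h3 (-1) (Or.inr rfl) ?_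
          intro d hd1 hd2
          refine ⟨by omega, by omega, Pn _ (by omega) (by omega) (by omega)⟩
        · exact Pn y' h1 hcase h3
    have hdown : ∀ n : ℤ, n ≤ y₀ + 1 → ∀ y' : ℤ, n ≤ y' → y' ≤ y₀ + t → 1 ≤ y' →
        ((x₀ + j, y', (w:ℤ)+1) : V3) ∈ C := by
      have key : ∀ n : ℤ, n ≤ y₀ + 1 → ∀ y' : ℤ, n ≤ y' → y' ≤ y₀ + t → 1 ≤ y' →
          ((x₀ + j, y', (w:ℤ)+1) : V3) ∈ C := by
        refine Int.le_induction_down ?_ ?_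
        · intro y' h1 h2 h3
          exact hmid y' h1 h2
        · intro n hn Pn y' h1 h2 h3
          rcases lt_or_ge y' n with hcase | hcase
          · have hy' : y' = n - 1 := by omega
            subst hy'
            refine hstep _ h3 (by omega) 1 (Or.inl rfl) ?_
            intro d hd1 hd2
            refine ⟨by omega, by omega, Pn _ (by omega) (by omega) (by omega)⟩
          · exact Pn y' hcase h2 h3
      exact key
    intro y hy1 hyh
    rcases le_or_gt y y₀ with hcase | hcase
    · exact hdown y (by omega) y le_rfl (by omega) hy1
    · rcases le_or_gt y (y₀ + t) with hcase2 | hcase2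
      · exact hmid y (by omega) hcase2
      · exact hup y (by omega) y (by omega) le_rfl hyh
  -- integer form over the ladder columns
  have hcolZ : ∀ x : ℤ, x₀ ≤ x → x < x₀ + s → ∀ y : ℤ, 1 ≤ y → y ≤ h →
      ((x, y, (w:ℤ)+1) : V3) ∈ C := by
    intro x hx1 hx2 y hy1 hy2
    have he : x = x₀ + ((x - x₀).toNat : ℤ) := by omega
    rw [he]
    exact hcol (x - x₀).toNat (by omega) y hy1 hy2
  -- horizontal spread step
  have hstep2 : ∀ X Y : ℤ, 1 ≤ X → X ≤ l → 1 ≤ Y → Y ≤ h → (ε₁ : ℤ) →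
      ∀ hε₁ : ε₁ = 1 ∨ ε₁ = -1,
      (∀ d : ℕ, 1 ≤ d → d ≤ s → 1 ≤ X + ε₁ * d ∧ X + ε₁ * d ≤ l ∧
        ((X + ε₁ * d, Y, (w:ℤ)+1) : V3) ∈ C) →
      ((X, Y, (w:ℤ)+1) : V3) ∈ C := by
    intro X Y h1 h2 h3 h4 ε₁ hε₁ hhor
    apply infect_step (hmemR _ _ _ h1 h2 h3 h4 (by omega) (by omega)) s 0 ε₁ 1
      hε₁ (Or.inl rfl) (by omega) (by omega) (by omega)
    · intro d hd1 hd2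
      simp only [Prod.mk_add_mk, add_zero]
      obtain ⟨q1, q2, q3⟩ := hhor d hd1 hd2
      exact ⟨hmemR _ _ _ q1 q2 h3 h4 (by omega) (by omega), q3⟩
    · intro d hd1 hd2
      omega
    · exact hcC _ _ h1 h2 h3 h4
  have hright : ∀ n : ℤ, x₀ + s - 1 ≤ n → ∀ x : ℤ, x₀ ≤ x → x ≤ n → x ≤ l →
      ∀ y : ℤ, 1 ≤ y → y ≤ h → ((x, y, (w:ℤ)+1) : V3) ∈ C := by
    refine Int.le_induction ?_ ?_
    · intro x h1 h2 h3 y hy1 hy2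
      exact hcolZ x h1 (by omega) y hy1 hy2
    · intro n hn Pn x h1 h2 h3 y hy1 hy2
      rcases lt_or_ge n x with hcase | hcase
      · have hx : x = n + 1 := by omega
        subst hx
        refine hstep2 _ _ (by omega) h3 hy1 hy2 (-1) (Or.inr rfl) ?_
        intro d hd1 hd2
        refine ⟨by omega, by omega, Pn _ (by omega) (by omega) (by omega) y hy1 hy2⟩
      · exact Pn x h1 hcase h3 y hy1 hy2
  have hleft : ∀ n : ℤ, n ≤ x₀ → ∀ x : ℤ, n ≤ x → x < x₀ + s → 1 ≤ x →
      ∀ y : ℤ, 1 ≤ y → y ≤ h → ((x, y, (w:ℤ)+1) : V3) ∈ C := by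
    refine Int.le_induction_down ?_ ?_
    · intro x h1 h2 h3 y hy1 hy2
      exact hcolZ x h1 h2 y hy1 hy2
    · intro n hn Pn x h1 h2 h3 y hy1 hy2
      rcases lt_or_ge x n with hcase | hcase
      · have hx : x = n - 1 := by omega
        subst hx
        refine hstep2 _ _ h3 (by omega) hy1 hy2 1 (Or.inl rfl) ?_
        intro d hd1 hd2
        refine ⟨by omega, by omega, Pn _ (by omega) (by omega) (by omega) y hy1 hy2⟩
      · exact Pn x hcase h2 h3 y hy1 hy2
  have hslab : ∀ x y : ℤ, 1 ≤ x → x ≤ l → 1 ≤ y → y ≤ h →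
      ((x, y, (w:ℤ)+1) : V3) ∈ C := by
    intro x y h1 h2 h3 h4
    rcases lt_or_ge x x₀ with hcase | hcase
    · exact hleft x (by omega) x le_rfl (by omega) h1 y h3 h4
    · rcases lt_or_ge x (x₀ + s) with hcase2 | hcase2
      · exact hcolZ x hcase hcase2 y h3 h4
      · exact hright x (by omega) x hcase le_rfl h2 y h3 h4
  -- conclude
  unfold IntFilled3
  refine Set.Subset.antisymm closure3_subset ?_
  intro v hv
  obtain ⟨x, y, z⟩ := v
  rw [Finset.mem_coe, mem_block3] at hv
  obtain ⟨h1, h2, h3, h4, h5, h6⟩ := hv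
  rcases lt_or_ge z ((w:ℤ)+1) with hcase | hcase
  · exact hsmall x y z h1 h2 h3 h4 h5 (by omega)
  · have hz : z = (w:ℤ) + 1 := by push_cast at h6 ⊢; omega
    subst hz
    exact hslab x y h1 h2 h3 h4

end Stmt9
namespace Stmt9

/-- `E` depends only on `A ∩ S`. -/
def DepOn (E : Finset V3 → Prop) (S : Finset V3) : Prop :=
  ∀ A : Finset V3, E A ↔ E (A ∩ S)

lemma DepOn.mono {E : Finset V3 → Prop} {S S' : Finset V3} (h : DepOn E S) (hSS' : S ⊆ S') :
    DepOn E S' := by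
  intro A
  rw [h A, h (A ∩ S'), Finset.inter_assoc, Finset.inter_eq_right.2 hSS']

lemma DepOn.not {E : Finset V3 → Prop} {S : Finset V3} (h : DepOn E S) :
    DepOn (fun A => ¬ E A) S := fun A => by rw [not_iff_not]; exact h A

lemma DepOn.forall {ι : Type*} {I : Finset ι} {E : ι → Finset V3 → Prop} {S : Finset V3}
    (h : ∀ i ∈ I, DepOn (E i) S) : DepOn (fun A => ∀ i ∈ I, E i A) S :=
  fun A => forall₂_congr fun i hi => h i hi A

lemma DepOn.exists {ι : Type*} {I : Finset ι} {E : ι → Finset V3 → Prop} {S : Finset V3}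
    (h : ∀ i ∈ I, DepOn (E i) S) : DepOn (fun A => ∃ i ∈ I, E i A) S := by
  intro A
  constructor
  · rintro ⟨i, hi, hEi⟩
    exact ⟨i, hi, (h i hi A).mp hEi⟩
  · rintro ⟨i, hi, hEi⟩
    exact ⟨i, hi, (h i hi A).mpr hEi⟩

lemma DepOn.subset {Q S : Finset V3} (hQS : Q ⊆ S) : DepOn (fun A => Q ⊆ A) S := by
  intro A
  constructor
  · intro hh
    exact Finset.subset_inter hh hQS
  · intro hh
    exact hh.trans Finset.inter_subset_left

lemma probOn_congr {p : ℝ} {V : Finset V3} {E F : Finset V3 → Prop}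
    (h : ∀ A, A ⊆ V → (E A ↔ F A)) : probOn p V E = probOn p V F := by
  refine Finset.sum_congr rfl fun A hA => ?_
  rw [if_congr (h A (Finset.mem_powerset.1 hA)) rfl rfl]

lemma probOn_nonneg {p : ℝ} (hp0 : 0 ≤ p) (hp1 : p ≤ 1) (V : Finset V3)
    (E : Finset V3 → Prop) : 0 ≤ probOn p V E := by
  refine Finset.sum_nonneg fun A _ => ?_
  split
  · have : (0:ℝ) ≤ 1 - p := by linarith
    positivity
  · exact le_rfl

lemma probOn_mono {p : ℝ} (hp0 : 0 ≤ p) (hp1 : p ≤ 1) (V : Finset V3)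
    {E F : Finset V3 → Prop} (h : ∀ A, A ⊆ V → E A → F A) :
    probOn p V E ≤ probOn p V F := by
  refine Finset.sum_le_sum fun A hA => ?_
  have h1p : (0:ℝ) ≤ 1 - p := by linarith
  have hw : (0:ℝ) ≤ p ^ A.card * (1 - p) ^ (V.card - A.card) := by positivity
  by_cases hE : E A
  · rw [if_pos hE, if_pos (h A (Finset.mem_powerset.1 hA) hE)]
  · rw [if_neg hE]
    split
    · exact hw
    · exact le_rfl

lemma probOn_true {p : ℝ} (V : Finset V3) : probOn p V (fun _ => True) = 1 := by
  unfold probOn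
  simp only [if_true]
  have h2 := Finset.prod_add (fun _ : V3 => p) (fun _ : V3 => 1 - p) V
  simp only [Finset.prod_const, add_sub_cancel] at h2
  have h3 : ∀ A ∈ V.powerset, p ^ A.card * (1 - p) ^ (V.card - A.card)
      = p ^ A.card * (1 - p) ^ (V \ A).card := by
    intro A hA
    rw [Finset.card_sdiff_of_subset (Finset.mem_powerset.1 hA)]
  rw [Finset.sum_congr rfl h3, ← h2, one_pow]

lemma probOn_le_one {p : ℝ} (hp0 : 0 ≤ p) (hp1 : p ≤ 1) (V : Finset V3)
    (E : Finset V3 → Prop) : probOn p V E ≤ 1 := by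
  rw [← probOn_true (p := p) V]
  exact probOn_mono hp0 hp1 V fun A _ _ => trivial

lemma probOn_not {p : ℝ} (V : Finset V3) (E : Finset V3 → Prop) :
    probOn p V (fun A => ¬ E A) = 1 - probOn p V E := by
  have h := probOn_true (p := p) V
  have h2 : probOn p V E + probOn p V (fun A => ¬ E A) = 1 := by
    rw [← h]
    unfold probOn
    rw [← Finset.sum_add_distrib]
    refine Finset.sum_congr rfl fun A _ => ?_
    by_cases hE : E A <;> simp [hE]
  linarith

lemma sum_powerset_union {S : Finset V3} :
    ∀ {T : Finset V3} (f : Finset V3 → ℝ), Disjoint S T →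
    ∑ A ∈ (S ∪ T).powerset, f A = ∑ B ∈ S.powerset, ∑ C ∈ T.powerset, f (B ∪ C) := by
  intro T
  induction T using Finset.induction_on with
  | empty => intro f _; simp
  | @insert a T' ha ih =>
    intro f hST
    have haS : a ∉ S := fun hc => Finset.disjoint_left.1 hST hc (Finset.mem_insert_self a T')
    have hST' : Disjoint S T' := hST.mono_right (Finset.subset_insert a T')
    have haU : a ∉ S ∪ T' := by simp [haS, ha]
    have hrhs : ∀ B : Finset V3, ∑ C ∈ (insert a T').powerset, f (B ∪ C)
        = ∑ C ∈ T'.powerset, f (B ∪ C) + ∑ C ∈ T'.powerset, f (insert a (B ∪ C)) := by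
      intro B
      rw [Finset.sum_powerset_insert ha]
      simp only [Finset.union_insert]
    rw [Finset.union_insert, Finset.sum_powerset_insert haU, ih f hST',
      ih (fun A => f (insert a A)) hST',
      Finset.sum_congr rfl fun B _ => hrhs B, Finset.sum_add_distrib]

lemma probOn_union_indep {p : ℝ} {S T : Finset V3} (hST : Disjoint S T)
    {E F : Finset V3 → Prop} (hE : DepOn E S) (hF : DepOn F T) :
    probOn p (S ∪ T) (fun A => E A ∧ F A) = probOn p S E * probOn p T F := by
  simp only [probOn]
  refine Eq.trans (sum_powerset_union _ hST) ?_
  rw [Finset.sum_mul_sum]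
  refine Finset.sum_congr rfl fun B hB => Finset.sum_congr rfl fun C hC => ?_
  have hBS : B ⊆ S := Finset.mem_powerset.1 hB
  have hCT : C ⊆ T := Finset.mem_powerset.1 hC
  have hBC : Disjoint B C := hST.mono hBS hCT
  have h1 : (B ∪ C) ∩ S = B := by
    rw [Finset.union_inter_distrib_right, Finset.inter_eq_left.2 hBS,
      Finset.disjoint_iff_inter_eq_empty.1 (hST.symm.mono_left hCT), Finset.union_empty]
  have h2 : (B ∪ C) ∩ T = C := by
    rw [Finset.union_inter_distrib_right, Finset.inter_eq_left.2 hCT,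
      Finset.disjoint_iff_inter_eq_empty.1 (hST.mono_left hBS), Finset.empty_union]
  have hEA : E (B ∪ C) ↔ E B := by rw [hE (B ∪ C), h1]
  have hFA : F (B ∪ C) ↔ F C := by rw [hF (B ∪ C), h2]
  have hcardBC : (B ∪ C).card = B.card + C.card := Finset.card_union_of_disjoint hBC
  have hcardST : (S ∪ T).card = S.card + T.card := Finset.card_union_of_disjoint hST
  have hBle := Finset.card_le_card hBS
  have hCle := Finset.card_le_card hCT
  have hsub : (S ∪ T).card - (B.card + C.card) = (S.card - B.card) + (T.card - C.card) := by
    omega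
  by_cases hEB : E B <;> by_cases hFC : F C <;>
    simp only [hEA, hFA, hEB, hFC, and_true, and_false, true_and, false_and,
      if_true, if_false, if_neg, mul_zero, zero_mul, ite_true, ite_false]
  rw [hcardBC, hsub, pow_add, pow_add]
  ring

lemma probOn_restrict {p : ℝ} {S V : Finset V3} (hSV : S ⊆ V) {E : Finset V3 → Prop}
    (hE : DepOn E S) : probOn p V E = probOn p S E := by
  have hV : V = S ∪ (V \ S) := by rw [Finset.union_sdiff_of_subset hSV]
  have hT : DepOn (fun _ : Finset V3 => True) (V \ S) := fun A => Iff.rfl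
  have h := probOn_union_indep (p := p) Finset.disjoint_sdiff hE hT
  rw [probOn_true, mul_one] at h
  rw [hV, ← h]
  exact probOn_congr fun A _ => (and_iff_left trivial).symm

lemma probOn_forall_indep {p : ℝ} {ι : Type*} [DecidableEq ι] {I : Finset ι}
    {S : ι → Finset V3} {E : ι → Finset V3 → Prop} :
    (∀ i ∈ I, ∀ j ∈ I, i ≠ j → Disjoint (S i) (S j)) →
    (∀ i ∈ I, DepOn (E i) (S i)) →
    probOn p (I.biUnion S) (fun A => ∀ i ∈ I, E i A) = ∏ i ∈ I, probOn p (S i) (E i) := by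
  induction I using Finset.induction_on with
  | empty =>
    intro _ _
    simp only [Finset.biUnion_empty, Finset.prod_empty]
    rw [probOn_congr (F := fun _ => True) (fun A _ => by simp), probOn_true]
  | @insert i I' hi ih =>
    intro hdisj hdep
    have hd : Disjoint (S i) (I'.biUnion S) := by
      rw [Finset.disjoint_biUnion_right]
      intro j hj
      exact hdisj i (Finset.mem_insert_self i I') j (Finset.mem_insert_of_mem hj)
        (fun hij => hi (hij ▸ hj))
    have hdep' : DepOn (fun A => ∀ j ∈ I', E j A) (I'.biUnion S) :=
      DepOn.forall fun j hj => (hdep j (Finset.mem_insert_of_mem hj)).mono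
        (Finset.subset_biUnion_of_mem S hj)
    rw [Finset.biUnion_insert, Finset.prod_insert hi,
      ← ih (fun i' hi' j hj' => hdisj i' (Finset.mem_insert_of_mem hi') j
        (Finset.mem_insert_of_mem hj')) (fun j hj => hdep j (Finset.mem_insert_of_mem hj)),
      ← probOn_union_indep hd (hdep i (Finset.mem_insert_self i I')) hdep']
    exact probOn_congr fun A _ => by simp [Finset.forall_mem_insert]

lemma probOn_singleton_mem {p : ℝ} (v : V3) : probOn p {v} (fun A => v ∈ A) = p := by
  unfold probOn
  rw [show ({v} : Finset V3).powerset = {∅, {v}} from rfl,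
    Finset.sum_pair (Finset.singleton_ne_empty v).symm]
  simp

lemma probOn_subset_event {p : ℝ} (Q : Finset V3) :
    probOn p Q (fun A => Q ⊆ A) = p ^ Q.card := by
  have h := probOn_forall_indep (p := p) (I := Q) (S := fun v => {v})
    (E := fun v A => v ∈ A)
    (fun i _ j _ hij => Finset.disjoint_singleton.2 hij)
    (fun i _ A => by simp)
  rw [Finset.biUnion_singleton_eq_self] at h
  rw [probOn_congr (F := fun A => ∀ v ∈ Q, v ∈ A) (fun A _ => Finset.subset_iff), h,
    Finset.prod_congr rfl fun v _ => probOn_singleton_mem v, Finset.prod_const]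

lemma probOn_pos {p : ℝ} (hp0 : 0 < p) (hp1 : p ≤ 1) (V : Finset V3) {F : Finset V3 → Prop}
    (hF : F V) : 0 < probOn p V F := by
  have h1p : (0:ℝ) ≤ 1 - p := by linarith
  have hterm : (0:ℝ) < p ^ V.card * (1-p) ^ (V.card - V.card) := by
    rw [Nat.sub_self, pow_zero, mul_one]
    positivity
  have hle := Finset.single_le_sum (f := fun A : Finset V3 =>
      if F A then p ^ A.card * (1-p) ^ (V.card - A.card) else 0)
    (fun A _ => by
      show (0:ℝ) ≤ if F A then p ^ A.card * (1-p) ^ (V.card - A.card) else 0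
      by_cases hA : F A
      · rw [if_pos hA]
        positivity
      · rw [if_neg hA])
    (Finset.mem_powerset_self V)
  have hle2 : (if F V then p ^ V.card * (1-p) ^ (V.card - V.card) else 0) ≤ probOn p V F := hle
  rw [if_pos hF] at hle2
  exact lt_of_lt_of_le hterm hle2

end Stmt9
namespace Stmt9

def run3 (x y₀ z : ℤ) (t : ℕ) : Finset V3 :=
  (Finset.Icc 1 t).image fun d : ℕ => (x, y₀ + (d:ℤ), z)

lemma mem_run3 {x y₀ z : ℤ} {t : ℕ} {v : V3} :
    v ∈ run3 x y₀ z t ↔ v.1 = x ∧ v.2.2 = z ∧ y₀ + 1 ≤ v.2.1 ∧ v.2.1 ≤ y₀ + t := by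
  obtain ⟨vx, vy, vz⟩ := v
  simp only [run3, Finset.mem_image, Finset.mem_Icc, Prod.mk.injEq]
  constructor
  · rintro ⟨d, ⟨hd1, hd2⟩, rfl, hy, rfl⟩
    have : (d:ℤ) ≤ t := by exact_mod_cast hd2
    have : (1:ℤ) ≤ d := by exact_mod_cast hd1
    exact ⟨rfl, rfl, by omega, by omega⟩
  · rintro ⟨rfl, rfl, h1, h2⟩
    exact ⟨(vy - y₀).toNat, ⟨by omega, by omega⟩, rfl, by omega, rfl⟩

lemma card_run3 {x y₀ z : ℤ} {t : ℕ} : (run3 x y₀ z t).card = t := by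
  rw [run3, Finset.card_image_of_injOn, Nat.card_Icc]
  · omega
  · intro d _ d' _ hdd'
    simp only [Prod.mk.injEq] at hdd'
    omega

def colsupp (x z : ℤ) (t K : ℕ) : Finset V3 :=
  (Finset.range K).biUnion fun k => run3 x ((k:ℤ)*t) z t

lemma mul_cast_le {k k' t : ℕ} (h : k < k') : ((k:ℤ))*t + t ≤ (k':ℤ)*t := by
  have h1 : ((k:ℤ) + 1) ≤ (k' : ℤ) := by exact_mod_cast h
  have h2 : (0:ℤ) ≤ t := by positivity
  nlinarith

lemma mem_colsupp {x z : ℤ} {t K : ℕ} {v : V3} (hv : v ∈ colsupp x z t K) :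
    v.1 = x ∧ v.2.2 = z ∧ 1 ≤ v.2.1 ∧ v.2.1 ≤ (K:ℤ)*t := by
  simp only [colsupp, Finset.mem_biUnion, Finset.mem_range] at hv
  obtain ⟨k, hk, hv⟩ := hv
  rw [mem_run3] at hv
  obtain ⟨h1, h2, h3, h4⟩ := hv
  have hk0 : (0:ℤ) ≤ (k:ℤ)*t := by positivity
  have := mul_cast_le (t := t) hk
  exact ⟨h1, h2, by omega, by omega⟩

lemma disj_runs {x z : ℤ} {t K : ℕ} : ∀ k ∈ Finset.range K, ∀ k' ∈ Finset.range K,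
    k ≠ k' → Disjoint (run3 x ((k:ℤ)*t) z t) (run3 x ((k':ℤ)*t) z t) := by
  intro k _ k' _ hkk'
  rw [Finset.disjoint_left]
  intro v hv hv'
  rw [mem_run3] at hv hv'
  rcases Nat.lt_or_ge k k' with hc | hc
  · have := mul_cast_le (t := t) hc
    omega
  · have hc2 : k' < k := by omega
    have := mul_cast_le (t := t) hc2
    omega

lemma probOn_colEvent {p : ℝ} (x z : ℤ) (t K : ℕ) :
    probOn p (colsupp x z t K)
      (fun A => ∃ k ∈ Finset.range K, run3 x ((k:ℤ)*t) z t ⊆ A)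
      = 1 - (1 - p^t)^K := by
  have h1 : probOn p (colsupp x z t K)
      (fun A => ∀ k ∈ Finset.range K, ¬ run3 x ((k:ℤ)*t) z t ⊆ A)
      = ∏ k ∈ Finset.range K, probOn p (run3 x ((k:ℤ)*t) z t)
          (fun A => ¬ run3 x ((k:ℤ)*t) z t ⊆ A) :=
    probOn_forall_indep disj_runs (fun k _ => (DepOn.subset (Finset.Subset.refl _)).not)
  have h2 : ∀ k : ℕ, probOn p (run3 x ((k:ℤ)*t) z t)
      (fun A => ¬ run3 x ((k:ℤ)*t) z t ⊆ A) = 1 - p^t := by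
    intro k
    rw [probOn_not, probOn_subset_event, card_run3]
  rw [Finset.prod_congr rfl (fun k _ => h2 k), Finset.prod_const, Finset.card_range] at h1
  have h3 := probOn_not (p := p) (colsupp x z t K)
      (fun A => ∀ k ∈ Finset.range K, ¬ run3 x ((k:ℤ)*t) z t ⊆ A)
  rw [h1] at h3
  rw [← h3]
  refine probOn_congr fun A _ => ?_
  push_neg
  exact Iff.rfl

def stripsupp (x₀ z : ℤ) (s h : ℕ) : Finset V3 :=
  (Finset.range s).biUnion fun j => colsupp (x₀ + j) z (s-j) (h/(s-j))

lemma mem_stripsupp {x₀ z : ℤ} {s h : ℕ} {v : V3} (hv : v ∈ stripsupp x₀ z s h) :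
    v.2.2 = z ∧ 1 ≤ v.2.1 ∧ v.2.1 ≤ (h:ℤ) ∧ x₀ ≤ v.1 ∧ v.1 + 1 ≤ x₀ + s := by
  simp only [stripsupp, Finset.mem_biUnion, Finset.mem_range] at hv
  obtain ⟨j, hj, hv⟩ := hv
  obtain ⟨h1, h2, h3, h4⟩ := mem_colsupp hv
  have hKt : (h/(s-j)) * (s-j) ≤ h := Nat.div_mul_le_self h (s-j)
  have hKt' : ((h/(s-j) : ℕ) : ℤ) * ((s-j : ℕ) : ℤ) ≤ (h:ℤ) := by exact_mod_cast hKt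
  have hjs : (j:ℤ) < s := by exact_mod_cast hj
  exact ⟨h2, h3, by omega, by omega, by omega⟩

lemma disj_cols {x₀ z : ℤ} {s h : ℕ} : ∀ j ∈ Finset.range s, ∀ j' ∈ Finset.range s,
    j ≠ j' → Disjoint (colsupp (x₀ + j) z (s-j) (h/(s-j)))
      (colsupp (x₀ + j') z (s-j') (h/(s-j'))) := by
  intro j _ j' _ hjj'
  rw [Finset.disjoint_left]
  intro v hv hv'
  have e1 := (mem_colsupp hv).1
  have e2 := (mem_colsupp hv').1
  have : (j:ℤ) ≠ (j':ℤ) := by exact_mod_cast hjj'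
  omega

lemma run3_subset_colsupp {x z : ℤ} {t K k : ℕ} (hk : k ∈ Finset.range K) :
    run3 x ((k:ℤ)*t) z t ⊆ colsupp x z t K := by
  unfold colsupp
  exact Finset.subset_biUnion_of_mem (fun k : ℕ => run3 x ((k:ℤ)*t) z t) hk

lemma colsupp_subset_stripsupp {x₀ z : ℤ} {s h j : ℕ} (hj : j ∈ Finset.range s) :
    colsupp (x₀ + (j:ℤ)) z (s-j) (h/(s-j)) ⊆ stripsupp x₀ z s h := by
  unfold stripsupp
  exact Finset.subset_biUnion_of_mem (fun j : ℕ => colsupp (x₀ + (j:ℤ)) z (s-j) (h/(s-j))) hj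

lemma DepOn_colEvent {x z : ℤ} {t K : ℕ} :
    DepOn (fun A => ∃ k ∈ Finset.range K, run3 x ((k:ℤ)*t) z t ⊆ A) (colsupp x z t K) := by
  refine DepOn.exists (ι := ℕ) (I := Finset.range K)
    (E := fun k A => run3 x ((k:ℤ)*t) z t ⊆ A) fun k hk => ?_
  exact DepOn.subset (run3_subset_colsupp hk)

lemma DepOn_stripEvent {x₀ z : ℤ} {s h : ℕ} :
    DepOn (fun A => ∀ j ∈ Finset.range s, ∃ k ∈ Finset.range (h/(s-j)),
      run3 (x₀ + (j:ℤ)) ((k:ℤ)*((s-j:ℕ):ℤ)) z (s-j) ⊆ A) (stripsupp x₀ z s h) := by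
  refine DepOn.forall (ι := ℕ) (I := Finset.range s)
    (E := fun j A => ∃ k ∈ Finset.range (h/(s-j)),
      run3 (x₀ + (j:ℤ)) ((k:ℤ)*((s-j:ℕ):ℤ)) z (s-j) ⊆ A) fun j hj => ?_
  exact (DepOn_colEvent (x := x₀ + (j:ℤ)) (t := s - j)).mono (colsupp_subset_stripsupp hj)

lemma probOn_stripEvent {p : ℝ} (x₀ z : ℤ) (s h : ℕ) :
    probOn p (stripsupp x₀ z s h)
      (fun A => ∀ j ∈ Finset.range s, ∃ k ∈ Finset.range (h/(s-j)),
        run3 (x₀ + j) ((k:ℤ)*((s-j:ℕ):ℤ)) z (s-j) ⊆ A)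
      = ∏ j ∈ Finset.range s, (1 - (1 - p^(s-j))^(h/(s-j))) := by
  have h1 : probOn p (stripsupp x₀ z s h)
      (fun A => ∀ j ∈ Finset.range s, ∃ k ∈ Finset.range (h/(s-j)),
        run3 (x₀ + j) ((k:ℤ)*((s-j:ℕ):ℤ)) z (s-j) ⊆ A)
      = ∏ j ∈ Finset.range s, probOn p (colsupp (x₀ + j) z (s-j) (h/(s-j)))
          (fun A => ∃ k ∈ Finset.range (h/(s-j)), run3 (x₀ + j) ((k:ℤ)*((s-j:ℕ):ℤ)) z (s-j) ⊆ A) :=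
    probOn_forall_indep (ι := ℕ) (I := Finset.range s)
      (S := fun j : ℕ => colsupp (x₀ + (j:ℤ)) z (s-j) (h/(s-j)))
      (E := fun (j : ℕ) A => ∃ k ∈ Finset.range (h/(s-j)),
        run3 (x₀ + (j:ℤ)) ((k:ℤ)*((s-j:ℕ):ℤ)) z (s-j) ⊆ A)
      disj_cols (fun j _ => DepOn_colEvent)
  rw [h1]
  exact Finset.prod_congr rfl fun j _ => probOn_colEvent _ _ _ _

def Gsupp (z : ℤ) (s h N : ℕ) : Finset V3 :=
  (Finset.range N).biUnion fun i => stripsupp ((i:ℤ)*s + 1) z s h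

def GEvent (z : ℤ) (s h N : ℕ) (A : Finset V3) : Prop :=
  ∃ i ∈ Finset.range N, ∀ j ∈ Finset.range s, ∃ k ∈ Finset.range (h/(s-j)),
    run3 ((i:ℤ)*s + 1 + j) ((k:ℤ)*((s-j:ℕ):ℤ)) z (s-j) ⊆ A

lemma mem_Gsupp {z : ℤ} {s h N : ℕ} {v : V3} (hv : v ∈ Gsupp z s N h) : True := trivial

lemma mem_Gsupp' {z : ℤ} {s h N : ℕ} {v : V3} (hv : v ∈ Gsupp z s h N) :
    v.2.2 = z ∧ 1 ≤ v.2.1 ∧ v.2.1 ≤ (h:ℤ) ∧ 1 ≤ v.1 ∧ v.1 ≤ (N:ℤ)*s := by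
  simp only [Gsupp, Finset.mem_biUnion, Finset.mem_range] at hv
  obtain ⟨i, hi, hv⟩ := hv
  obtain ⟨h1, h2, h3, h4, h5⟩ := mem_stripsupp hv
  have hi0 : (0:ℤ) ≤ (i:ℤ)*s := by positivity
  have := mul_cast_le (t := s) hi
  exact ⟨h1, h2, h3, by omega, by omega⟩

lemma disj_strips {z : ℤ} {s h N : ℕ} : ∀ i ∈ Finset.range N, ∀ i' ∈ Finset.range N,
    i ≠ i' → Disjoint (stripsupp ((i:ℤ)*s + 1) z s h) (stripsupp ((i':ℤ)*s + 1) z s h) := by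
  intro i _ i' _ hii'
  rw [Finset.disjoint_left]
  intro v hv hv'
  obtain ⟨-, -, -, a1, a2⟩ := mem_stripsupp hv
  obtain ⟨-, -, -, b1, b2⟩ := mem_stripsupp hv'
  rcases Nat.lt_or_ge i i' with hc | hc
  · have := mul_cast_le (t := s) hc
    omega
  · have hc2 : i' < i := by omega
    have := mul_cast_le (t := s) hc2
    omega

lemma stripsupp_subset_Gsupp {z : ℤ} {s h N i : ℕ} (hi : i ∈ Finset.range N) :
    stripsupp ((i:ℤ)*s + 1) z s h ⊆ Gsupp z s h N := by
  unfold Gsupp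
  exact Finset.subset_biUnion_of_mem (fun i : ℕ => stripsupp ((i:ℤ)*s + 1) z s h) hi

lemma DepOn_GEvent {z : ℤ} {s h N : ℕ} : DepOn (GEvent z s h N) (Gsupp z s h N) :=
  DepOn.exists (ι := ℕ) (I := Finset.range N)
    (E := fun (i : ℕ) A => ∀ j ∈ Finset.range s, ∃ k ∈ Finset.range (h/(s-j)),
      run3 ((i:ℤ)*s + 1 + j) ((k:ℤ)*((s-j:ℕ):ℤ)) z (s-j) ⊆ A)
    fun i hi => (DepOn_stripEvent (x₀ := (i:ℤ)*s + 1)).mono (stripsupp_subset_Gsupp hi)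

lemma probOn_G_compl {p : ℝ} (z : ℤ) (s h N : ℕ) :
    probOn p (Gsupp z s h N) (fun A => ¬ GEvent z s h N A)
      = (1 - ∏ j ∈ Finset.range s, (1 - (1 - p^(s-j))^(h/(s-j))))^N := by
  have h1 : probOn p (Gsupp z s h N)
      (fun A => ∀ i ∈ Finset.range N, ¬ ∀ j ∈ Finset.range s, ∃ k ∈ Finset.range (h/(s-j)),
        run3 ((i:ℤ)*s + 1 + j) ((k:ℤ)*((s-j:ℕ):ℤ)) z (s-j) ⊆ A)
      = ∏ i ∈ Finset.range N, probOn p (stripsupp ((i:ℤ)*s + 1) z s h)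
          (fun A => ¬ ∀ j ∈ Finset.range s, ∃ k ∈ Finset.range (h/(s-j)),
            run3 ((i:ℤ)*s + 1 + j) ((k:ℤ)*((s-j:ℕ):ℤ)) z (s-j) ⊆ A) := by
    exact probOn_forall_indep (ι := ℕ) (I := Finset.range N)
      (S := fun i : ℕ => stripsupp ((i:ℤ)*s + 1) z s h)
      (E := fun (i : ℕ) A => ¬ ∀ j ∈ Finset.range s, ∃ k ∈ Finset.range (h/(s-j)),
        run3 ((i:ℤ)*s + 1 + j) ((k:ℤ)*((s-j:ℕ):ℤ)) z (s-j) ⊆ A)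
      disj_strips (fun i _ => DepOn.not DepOn_stripEvent)
  have h2 : ∀ i : ℕ, probOn p (stripsupp ((i:ℤ)*s + 1) z s h)
      (fun A => ¬ ∀ j ∈ Finset.range s, ∃ k ∈ Finset.range (h/(s-j)),
        run3 ((i:ℤ)*s + 1 + j) ((k:ℤ)*((s-j:ℕ):ℤ)) z (s-j) ⊆ A)
      = 1 - ∏ j ∈ Finset.range s, (1 - (1 - p^(s-j))^(h/(s-j))) := by
    intro i
    rw [probOn_not, probOn_stripEvent]
  rw [Finset.prod_congr rfl (fun i _ => h2 i), Finset.prod_const, Finset.card_range] at h1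
  rw [← h1]
  refine probOn_congr fun A _ => ?_
  unfold GEvent
  push_neg
  exact Iff.rfl

end Stmt9
namespace Stmt9

lemma nat_div_half {h t : ℕ} (ht : 1 ≤ t) (hth : t ≤ h) : (h:ℝ) ≤ 2 * ((h/t : ℕ):ℝ) * t := by
  have h1 : t * (h/t) + h % t = h := Nat.div_add_mod h t
  have h2 : h % t < t := Nat.mod_lt h (by omega)
  have h3 : 1 ≤ h / t := (Nat.one_le_div_iff (by omega)).2 hth
  have key : h ≤ 2 * (h/t) * t := by nlinarith
  exact_mod_cast key

lemma one_sub_exp_lb {u : ℝ} (hu : 0 ≤ u) : u / (1 + u) ≤ 1 - Real.exp (-u) := by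
  have h1 : u + 1 ≤ Real.exp u := Real.add_one_le_exp u
  have h2 : Real.exp (-u) = (Real.exp u)⁻¹ := Real.exp_neg u
  have h0 : (0:ℝ) < 1 + u := by linarith
  have h3 : (Real.exp u)⁻¹ ≤ (1+u)⁻¹ := by
    apply inv_anti₀ h0
    linarith
  have h4 : 1 - (1+u)⁻¹ = u/(1+u) := by field_simp; ring
  linarith

lemma factor_bound {p : ℝ} (hp0 : 0 < p) (hp1 : p ≤ 1) {s t h : ℕ}
    (ht1 : 1 ≤ t) (hts : t ≤ s) (hsh : s ≤ h) :
    min 1 ((h:ℝ) * p^t) / (4*s) ≤ 1 - (1 - p^t)^(h/t) := by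
  have hs1 : 1 ≤ s := le_trans ht1 hts
  have hsR : (1:ℝ) ≤ s := by exact_mod_cast hs1
  have htR : (1:ℝ) ≤ t := by exact_mod_cast ht1
  have htsR : (t:ℝ) ≤ s := by exact_mod_cast hts
  have hx0 : 0 < p^t := by positivity
  have hx1 : p^t ≤ 1 := pow_le_one₀ hp0.le hp1
  set x := p^t with hxdef
  set K := h/t with hKdef
  have hKb : (h:ℝ) ≤ 2*(K:ℝ)*t := by
    have := nat_div_half ht1 (le_trans hts hsh)
    linarith
  have e1 : (1-x)^K ≤ Real.exp (-((K:ℝ)*x)) := by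
    have hb : 1 - x ≤ Real.exp (-x) := by nlinarith [Real.add_one_le_exp (-x)]
    calc (1-x)^K ≤ (Real.exp (-x))^K := pow_le_pow_left₀ (by linarith) hb K
      _ = Real.exp ((K:ℝ) * (-x)) := (Real.exp_nat_mul (-x) K).symm
      _ = Real.exp (-((K:ℝ)*x)) := by ring_nf
  set u := (h:ℝ) * x / (2*s) with hu
  have hu0 : 0 ≤ u := by positivity
  have hK0 : (0:ℝ) ≤ K := by positivity
  have e2 : Real.exp (-((K:ℝ)*x)) ≤ Real.exp (-u) := by
    apply Real.exp_le_exp.2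
    have hh : (h:ℝ) * x ≤ 2*(K:ℝ)*s*x := by
      nlinarith [mul_le_mul_of_nonneg_right hKb hx0.le,
        mul_le_mul_of_nonneg_left htsR (by positivity : (0:ℝ) ≤ 2*(K:ℝ)*x)]
    rw [hu, neg_le_neg_iff, div_le_iff₀ (by positivity)]
    nlinarith
  have e3 := one_sub_exp_lb hu0
  have hX0 : (0:ℝ) ≤ (h:ℝ) * x := by positivity
  have hrw : u/(1+u) = (h:ℝ)*x/(2*s + (h:ℝ)*x) := by
    rw [hu]
    have h2s : (2:ℝ)*(s:ℝ) ≠ 0 := by positivity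
    have h1u : (0:ℝ) < 2*(s:ℝ) + (h:ℝ)*x := by positivity
    field_simp
  have goal2 : min 1 ((h:ℝ) * x) / (4*s) ≤ u/(1+u) := by
    rw [hrw, div_le_div_iff₀ (by positivity) (by positivity)]
    have hmin1 : min 1 ((h:ℝ)*x) ≤ 1 := min_le_left _ _
    have hmin2 : min 1 ((h:ℝ)*x) ≤ (h:ℝ)*x := min_le_right _ _
    have hmin0 : 0 ≤ min 1 ((h:ℝ)*x) := le_min (by norm_num) hX0
    rcases le_or_gt ((h:ℝ)*x) (2*s) with hc | hc
    · nlinarith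
    · nlinarith
  calc min 1 ((h:ℝ)*x)/(4*s) ≤ u/(1+u) := goal2
    _ ≤ 1 - Real.exp (-u) := e3
    _ ≤ 1 - (1-x)^K := by linarith [le_trans e1 e2]

end Stmt9
namespace Stmt9

lemma prod_bound {p : ℝ} (hp0 : 0 < p) (hp1 : p ≤ 1) {s m h : ℕ}
    (hs1 : 1 ≤ s) (hm : m ≤ s) (hsh : s ≤ h)
    (hlow : 1 ≤ (h:ℝ) * p^m) (hhigh : (h:ℝ) * p^(m+1) ≤ 1) :
    (h:ℝ)^(s-m) * p^(∑ i ∈ Finset.Icc (m+1) s, i) / (4*(s:ℝ))^s ≤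
      ∏ j ∈ Finset.range s, (1 - (1 - p^(s-j))^(h/(s-j))) := by
  have hh0 : (0:ℝ) ≤ (h:ℝ) := by positivity
  have hlb : ∀ j ∈ Finset.range s, (0:ℝ) ≤ min 1 ((h:ℝ) * p^(s-j)) / (4*(s:ℝ)) := by
    intro j _
    exact div_nonneg (le_min zero_le_one (by positivity)) (by positivity)
  have h1 : ∏ j ∈ Finset.range s, (min 1 ((h:ℝ)*p^(s-j)) / (4*(s:ℝ))) ≤
      ∏ j ∈ Finset.range s, (1 - (1 - p^(s-j))^(h/(s-j))) := by
    refine Finset.prod_le_prod hlb fun j hj => ?_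
    have hjs : j < s := Finset.mem_range.1 hj
    exact factor_bound hp0 hp1 (by omega) (by omega) hsh
  have h2 : ∏ j ∈ Finset.range s, (min 1 ((h:ℝ)*p^(s-j)) / (4*(s:ℝ)))
      = (∏ j ∈ Finset.range s, min 1 ((h:ℝ)*p^(s-j))) / (4*(s:ℝ))^s := by
    rw [Finset.prod_div_distrib, Finset.prod_const, Finset.card_range]
  have h3 : ∏ j ∈ Finset.range (s-m), min 1 ((h:ℝ)*p^(s-j))
      = ∏ j ∈ Finset.range s, min 1 ((h:ℝ)*p^(s-j)) := by
    refine Finset.prod_subset (Finset.range_subset_range.2 (by omega)) ?_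
    intro j hj hj'
    rw [Finset.mem_range] at hj hj'
    refine min_eq_left ?_
    have hpm : p^m ≤ p^(s-j) := pow_le_pow_of_le_one hp0.le hp1 (by omega)
    nlinarith
  have h4 : ∀ j ∈ Finset.range (s-m), min 1 ((h:ℝ)*p^(s-j)) = (h:ℝ)*p^(s-j) := by
    intro j hj
    rw [Finset.mem_range] at hj
    refine min_eq_right ?_
    have hpm : p^(s-j) ≤ p^(m+1) := pow_le_pow_of_le_one hp0.le hp1 (by omega)
    nlinarith
  have h5 : ∏ j ∈ Finset.range (s-m), ((h:ℝ)*p^(s-j))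
      = (h:ℝ)^(s-m) * p^(∑ j ∈ Finset.range (s-m), (s-j)) := by
    rw [Finset.prod_mul_distrib, Finset.prod_const, Finset.card_range,
      Finset.prod_pow_eq_pow_sum]
  have h6 : ∑ j ∈ Finset.range (s-m), (s-j) = ∑ i ∈ Finset.Icc (m+1) s, i := by
    refine Finset.sum_nbij' (fun j => s - j) (fun t => s - t) ?_ ?_ ?_ ?_ ?_
    · intro j hj
      rw [Finset.mem_range] at hj
      rw [Finset.mem_Icc]
      show m + 1 ≤ s - j ∧ s - j ≤ s
      omega
    · intro t ht
      rw [Finset.mem_Icc] at ht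
      rw [Finset.mem_range]
      show s - t < s - m
      omega
    · intro j hj
      rw [Finset.mem_range] at hj
      show s - (s - j) = j
      omega
    · intro t ht
      rw [Finset.mem_Icc] at ht
      show s - (s - t) = t
      omega
    · intro j _
      rfl
  calc (h:ℝ)^(s-m) * p^(∑ i ∈ Finset.Icc (m+1) s, i) / (4*(s:ℝ))^s
      = (∏ j ∈ Finset.range (s-m), ((h:ℝ)*p^(s-j))) / (4*(s:ℝ))^s := by rw [h5, h6]
    _ = (∏ j ∈ Finset.range (s-m), min 1 ((h:ℝ)*p^(s-j))) / (4*(s:ℝ))^s := by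
        rw [Finset.prod_congr rfl h4]
    _ = (∏ j ∈ Finset.range s, min 1 ((h:ℝ)*p^(s-j))) / (4*(s:ℝ))^s := by rw [h3]
    _ = ∏ j ∈ Finset.range s, (min 1 ((h:ℝ)*p^(s-j)) / (4*(s:ℝ))) := h2.symm
    _ ≤ _ := h1

lemma final_numeric {q X : ℝ} {s l N : ℕ} (hs1 : 1 ≤ s) (hsl : s ≤ l) (hN : N = l / s)
    (hq0 : 0 ≤ q) (hq1 : q ≤ 1) (hX : 0 ≤ X) (hqX : X / (4*(s:ℝ))^s ≤ q) :
    (1 - q)^N ≤ Real.exp (-(1/((4*(s:ℝ))^s * (2*s))) * X * l) := by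
  have hsR : (1:ℝ) ≤ (s:ℝ) := by exact_mod_cast hs1
  have e1 : (1-q)^N ≤ Real.exp (-((N:ℝ)*q)) := by
    have hb : 1 - q ≤ Real.exp (-q) := by nlinarith [Real.add_one_le_exp (-q)]
    calc (1-q)^N ≤ (Real.exp (-q))^N := pow_le_pow_left₀ (by linarith) hb N
      _ = Real.exp ((N:ℝ) * (-q)) := (Real.exp_nat_mul (-q) N).symm
      _ = Real.exp (-((N:ℝ)*q)) := by ring_nf
  refine le_trans e1 (Real.exp_le_exp.2 ?_)
  have hNl : (l:ℝ) ≤ 2*(N:ℝ)*s := by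
    rw [hN]
    exact nat_div_half hs1 hsl
  have hl2s : (l:ℝ)/(2*s) ≤ (N:ℝ) := by
    rw [div_le_iff₀ (by positivity)]
    nlinarith
  have hmul : X/(4*(s:ℝ))^s * ((l:ℝ)/(2*s)) ≤ q * (N:ℝ) :=
    mul_le_mul hqX hl2s (by positivity) hq0
  have heq : (1/((4*(s:ℝ))^s * (2*s))) * X * (l:ℝ) = X/(4*(s:ℝ))^s * ((l:ℝ)/(2*s)) := by
    field_simp
  linarith [hmul, heq]

end Stmt9
set_option maxHeartbeats 1000000 in
/-- growth along the `e₃`-direction for `c+3 ≤ r ≤ a+c`, `s = r-c`. -/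
theorem stmt9 (a b c r m : ℕ) (ha : 1 ≤ a) (hab : a ≤ b) (hbc : b ≤ c)
    (hr1 : c + 3 ≤ r) (hr2 : r ≤ a + c) (hm : m ≤ r - c) :
    ∃ κ p₀ : ℝ, 0 < κ ∧ 0 < p₀ ∧ ∀ p : ℝ, 0 < p → p < p₀ →
      ∀ l h w : ℕ, c ≤ l → c ≤ h → c ≤ w →
        p ^ (-(m : ℝ)) < (h : ℝ) → (h : ℝ) ≤ p ^ (-((m : ℝ) + 1)) →
        1 - Real.exp (-κ * (h : ℝ) ^ (r - c - m) * (l : ℝ) *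
            p ^ (∑ i ∈ Finset.Icc (m + 1) (r - c), i)) ≤
          condProbOn p (block3 l h (w + 1))
            (IntFilled3 a b c r (block3 l h (w + 1)))
            (IntFilled3 a b c r (block3 l h w)) := by
  classical
  open Stmt9 in
  set s : ℕ := r - c with hsdef
  have hs1 : 1 ≤ s := by omega
  have hsa : s ≤ a := by omega
  have hrcs : r = c + s := by omega
  refine ⟨1/((4*(s:ℝ))^s * (2*(s:ℝ))), 1, by positivity, one_pos, ?_⟩
  intro p hp0 hp1 l h w hcl hch hcw hlow hhigh
  have hp1' : p ≤ 1 := hp1.le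
  set N : ℕ := l / s with hNdef
  set z : ℤ := (w:ℤ) + 1 with hzdef
  set Sm := block3 l h w with hSm
  set V := block3 l h (w+1) with hV
  set Sl := V \ Sm with hSl
  have hSmV : Sm ⊆ V := by
    intro v hv
    rw [hSm, Stmt9.mem_block3] at hv
    rw [hV, Stmt9.mem_block3]
    push_cast at hv ⊢
    omega
  -- rpow conversions
  have hpm : (0:ℝ) < p^m := by positivity
  have hlow' : 1 ≤ (h:ℝ) * p^m := by
    have h1 : p ^ (-(m:ℝ)) = (p^m)⁻¹ := by
      rw [Real.rpow_neg hp0.le, Real.rpow_natCast]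
    rw [h1] at hlow
    have h2 : (p^m)⁻¹ * p^m ≤ (h:ℝ) * p^m := mul_le_mul_of_nonneg_right hlow.le hpm.le
    rwa [inv_mul_cancel₀ (ne_of_gt hpm)] at h2
  have hhigh' : (h:ℝ) * p^(m+1) ≤ 1 := by
    have hpm1 : (0:ℝ) < p^(m+1) := by positivity
    have h1 : p ^ (-((m:ℝ)+1)) = (p^(m+1))⁻¹ := by
      rw [show -((m:ℝ)+1) = -(((m+1:ℕ)):ℝ) by push_cast; ring, Real.rpow_neg hp0.le,
        Real.rpow_natCast]
    rw [h1] at hhigh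
    have h2 : (h:ℝ) * p^(m+1) ≤ (p^(m+1))⁻¹ * p^(m+1) :=
      mul_le_mul_of_nonneg_right hhigh hpm1.le
    rwa [inv_mul_cancel₀ (ne_of_gt hpm1)] at h2
  -- the factor product
  set q : ℝ := ∏ j ∈ Finset.range s, (1 - (1 - p^(s-j))^(h/(s-j))) with hqdef
  have hfac : ∀ j : ℕ, 0 ≤ 1 - (1 - p^(s-j))^(h/(s-j)) ∧ 1 - (1 - p^(s-j))^(h/(s-j)) ≤ 1 := by
    intro j
    have hx1 : p^(s-j) ≤ 1 := pow_le_one₀ hp0.le hp1'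
    have hx0 : (0:ℝ) ≤ p^(s-j) := by positivity
    constructor
    · have hle : (1 - p^(s-j))^(h/(s-j)) ≤ 1 := pow_le_one₀ (by linarith) (by linarith)
      linarith
    · have hge : (0:ℝ) ≤ (1 - p^(s-j))^(h/(s-j)) := pow_nonneg (by linarith) _
      linarith
  have hq0 : 0 ≤ q := Finset.prod_nonneg fun j _ => (hfac j).1
  have hq1 : q ≤ 1 := Finset.prod_le_one (fun j _ => (hfac j).1) (fun j _ => (hfac j).2)
  -- dependence structure
  have hdepF : Stmt9.DepOn (fun A => IntFilled3 a b c r Sm A) Sm := by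
    intro A
    show closure3 a b c r ↑Sm ↑A = ↑Sm ↔ closure3 a b c r ↑Sm ↑(A ∩ Sm) = ↑Sm
    have he : (↑A : Set Stmt9.V3) ∩ ↑Sm = ↑(A ∩ Sm) ∩ ↑Sm := by
      rw [Finset.coe_inter, Set.inter_assoc, Set.inter_self]
    rw [Stmt9.closure3_congr he]
  have hNs : N * s ≤ l := Nat.div_mul_le_self l s
  have hNs' : ((N:ℤ))*(s:ℤ) ≤ (l:ℤ) := by exact_mod_cast hNs
  have hGsub : Stmt9.Gsupp z s h N ⊆ Sl := by
    intro v hv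
    obtain ⟨e1, e2, e3, e4, e5⟩ := Stmt9.mem_Gsupp' hv
    rw [hSl, Finset.mem_sdiff]
    constructor
    · rw [hV, Stmt9.mem_block3]
      push_cast
      refine ⟨by omega, by linarith, by omega, by omega, by omega, by omega⟩
    · rw [hSm, Stmt9.mem_block3]
      intro hc
      omega
  have hdepG : Stmt9.DepOn (Stmt9.GEvent z s h N) Sl := Stmt9.DepOn_GEvent.mono hGsub
  have hdepnG : Stmt9.DepOn (fun A => ¬ Stmt9.GEvent z s h N A) (Stmt9.Gsupp z s h N) :=
    Stmt9.DepOn_GEvent.not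
  -- the implication
  have himp : ∀ A : Finset Stmt9.V3, A ⊆ V →
      (Stmt9.GEvent z s h N A ∧ IntFilled3 a b c r Sm A) →
      (IntFilled3 a b c r V A ∧ IntFilled3 a b c r Sm A) := by
    rintro A - ⟨⟨i, hi, hstrip⟩, hFA⟩
    refine ⟨?_, hFA⟩
    rw [Finset.mem_range] at hi
    have his := Stmt9.mul_cast_le (t := s) hi
    have hi0 : (0:ℤ) ≤ (i:ℤ)*(s:ℤ) := by positivity
    rw [hV]
    refine Stmt9.fill_big a b c r s l h w hs1 hsa hab hbc hrcs hcl hch hcw A hFA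
      ((i:ℤ)*(s:ℤ) + 1) (by linarith) (by push_cast; linarith) ?_
    intro j hj
    obtain ⟨k, hk, hrun⟩ := hstrip j (Finset.mem_range.2 hj)
    rw [Finset.mem_range] at hk
    have h1 := Stmt9.mul_cast_le (t := s - j) hk
    have h2 : (h/(s-j)) * (s-j) ≤ h := Nat.div_mul_le_self h (s-j)
    have h2' : ((h/(s-j) : ℕ):ℤ) * ((s-j:ℕ):ℤ) ≤ (h:ℤ) := by exact_mod_cast h2
    have hk0 : (0:ℤ) ≤ (k:ℤ)*((s-j:ℕ):ℤ) := by positivity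
    refine ⟨(k:ℤ)*((s-j:ℕ):ℤ), hk0, by linarith, ?_⟩
    intro d hd1 hd2
    apply hrun
    rw [Stmt9.mem_run3]
    have hd1' : (1:ℤ) ≤ (d:ℤ) := by exact_mod_cast hd1
    have hd2' : (d:ℤ) ≤ ((s-j:ℕ):ℤ) := by exact_mod_cast hd2
    refine ⟨rfl, hzdef.symm, ?_, ?_⟩
    · show (k:ℤ) * ((s-j:ℕ):ℤ) + 1 ≤ (k:ℤ)*((s-j:ℕ):ℤ) + (d:ℤ)
      linarith
    · show (k:ℤ)*((s-j:ℕ):ℤ) + (d:ℤ) ≤ (k:ℤ)*((s-j:ℕ):ℤ) + ((s-j:ℕ):ℤ)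
      linarith
  -- probability chain
  have hmono := Stmt9.probOn_mono (p := p) hp0.le hp1' V himp
  have hdisj : Disjoint Sl Sm := Finset.sdiff_disjoint
  have hunion : Sl ∪ Sm = V := Finset.sdiff_union_of_subset hSmV
  have hfact : probOn p V (fun A => Stmt9.GEvent z s h N A ∧ IntFilled3 a b c r Sm A)
      = probOn p Sl (Stmt9.GEvent z s h N) * probOn p Sm (IntFilled3 a b c r Sm) := by
    rw [← hunion]
    exact Stmt9.probOn_union_indep hdisj hdepG hdepF
  have hrestr : probOn p V (fun A => IntFilled3 a b c r Sm A)
      = probOn p Sm (fun A => IntFilled3 a b c r Sm A) :=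
    Stmt9.probOn_restrict hSmV hdepF
  have hposF : 0 < probOn p Sm (fun A => IntFilled3 a b c r Sm A) := by
    refine Stmt9.probOn_pos hp0 hp1' Sm ?_
    unfold IntFilled3
    exact Set.Subset.antisymm Stmt9.closure3_subset
      (fun v hv => Stmt9.subset_closure3 ⟨hv, hv⟩)
  have hGprob : probOn p Sl (Stmt9.GEvent z s h N) = 1 - (1-q)^N := by
    have h1 : probOn p Sl (fun A => ¬ Stmt9.GEvent z s h N A) = (1-q)^N := by
      rw [Stmt9.probOn_restrict hGsub hdepnG, Stmt9.probOn_G_compl]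
    have h2 := Stmt9.probOn_not (p := p) Sl (Stmt9.GEvent z s h N)
    linarith
  have hcond : 1 - (1-q)^N ≤ condProbOn p V (IntFilled3 a b c r V) (IntFilled3 a b c r Sm) := by
    unfold condProbOn
    rw [hrestr, le_div_iff₀ hposF]
    calc (1 - (1-q)^N) * probOn p Sm (fun A => IntFilled3 a b c r Sm A)
        = probOn p Sl (Stmt9.GEvent z s h N) * probOn p Sm (IntFilled3 a b c r Sm) := by
          rw [hGprob]
      _ = probOn p V (fun A => Stmt9.GEvent z s h N A ∧ IntFilled3 a b c r Sm A) := hfact.symm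
      _ ≤ probOn p V (fun A => IntFilled3 a b c r V A ∧ IntFilled3 a b c r Sm A) := hmono
  -- numerics
  have hnum : (1-q)^N ≤ Real.exp (-(1/((4*(s:ℝ))^s*(2*(s:ℝ)))) *
      ((h:ℝ)^(s-m) * p^(∑ i ∈ Finset.Icc (m+1) s, i)) * (l:ℝ)) :=
    Stmt9.final_numeric hs1 (by omega) hNdef hq0 hq1 (by positivity)
      (Stmt9.prod_bound hp0 hp1' hs1 hm (by omega) hlow' hhigh')
  have hexp_eq : -(1/((4*(s:ℝ))^s*(2*(s:ℝ)))) *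
      ((h:ℝ)^(s-m) * p^(∑ i ∈ Finset.Icc (m+1) s, i)) * (l:ℝ)
      = -(1/((4*(s:ℝ))^s * (2*(s:ℝ)))) * (h:ℝ)^(s-m) * (l:ℝ) *
        p^(∑ i ∈ Finset.Icc (m+1) s, i) := by ring
  rw [hexp_eq] at hnum
  linarith
end
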